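/- arXiv:2402.05556 — 8 statements merged into one kernel-verified Lean document; each statement's English description precedes it below -/
import Mathlib

section
/- Let E be a real normed vector space, let U ⊆ ℝ be open, let g : ℝ → E be k times continuously differentiable on U for some integer k ≥ 1, and define h : ℝ → E by h(β) = g(β²). Then for every β ≠ 0 with β² ∈ U one has g^{(k)}(β²) = 2^{−k} · ∑_{ℓ=1}^{k} a_ℓ^{(k)} · β^{ℓ−2k} · h^{(ℓ)}(β), where g^{(k)} and h^{(ℓ)} denote iterated derivatives. -/
/-- The coefficients `a_ℓ^{(k)}` from Proposition 4.2 of the paper. -/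
noncomputable def coeffA (k ℓ : ℕ) : ℚ :=
  if ℓ = 0 then 0
  else (-2 : ℚ) ^ ((ℓ : ℤ) - (k : ℤ)) * (Nat.factorial (2 * k - ℓ - 1)) /
    ((Nat.factorial (ℓ - 1)) * (Nat.factorial (k - ℓ)))

lemma neg_two_zpow (a b : ℕ) (hab : a ≤ b) :
    (-2:ℚ)^((a:ℤ)-(b:ℤ)) = ((-2:ℚ)^(b-a))⁻¹ := by
  rw [show (a:ℤ)-(b:ℤ) = -(((b-a:ℕ)):ℤ) by push_cast [hab]; ring, zpow_neg, zpow_natCast]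

lemma coeffA_zero (k : ℕ) : coeffA k 0 = 0 := by simp [coeffA]

lemma coeffA_diag (k : ℕ) (hk : 1 ≤ k) : coeffA k k = 1 := by
  have h1 : 2*k - k - 1 = k - 1 := by omega
  have h2 : k - k = 0 := by omega
  have h3 : k ≠ 0 := by omega
  simp only [coeffA, h1, h2, if_neg h3, sub_self, zpow_zero, Nat.factorial_zero, Nat.cast_one,
    mul_one, one_mul]
  rw [div_self]
  exact_mod_cast Nat.factorial_ne_zero _

lemma coeffA_rec (k ℓ : ℕ) (h1 : 1 ≤ ℓ) (h2 : ℓ ≤ k) :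
    coeffA (k+1) ℓ = ((ℓ:ℚ) - 2*k) * coeffA k ℓ + coeffA k (ℓ-1) := by
  obtain ⟨d, rfl⟩ : ∃ d, k = ℓ + d := ⟨k - ℓ, by omega⟩
  match ℓ, h1 with
  | 1, _ =>
    simp only [coeffA, if_neg (by omega : (1:ℕ) ≠ 0), if_pos rfl]
    rw [show 1 - 1 = 0 by rfl]
    rw [show 2*(1+d+1) - 1 - 1 = 2*d+1+1 by omega, show 1+d+1-1 = d+1 by omega,
      show 2*(1+d) - 1 - 1 = 2*d by omega, show 1+d-1 = d by omega,
      neg_two_zpow 1 (1+d+1) (by omega), neg_two_zpow 1 (1+d) (by omega),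
      show 1+d+1-1 = d+1 by omega, show 1+d-1 = d by omega,
      Nat.factorial_succ (2*d+1), Nat.factorial_succ (2*d), Nat.factorial_succ d]
    have hf : ((2*d).factorial : ℚ) ≠ 0 := by exact_mod_cast Nat.factorial_ne_zero _
    have hf2 : ((d).factorial : ℚ) ≠ 0 := by exact_mod_cast Nat.factorial_ne_zero _
    have hp : ((-2:ℚ))^(d+1) ≠ 0 := by positivity
    have hp2 : ((-2:ℚ))^d ≠ 0 := by positivity
    push_cast
    rw [pow_succ]
    field_simp
    ring
  | (m+2), _ =>
    simp only [coeffA, if_neg (by omega : (m+2:ℕ) ≠ 0), if_neg (by omega : (m+2-1:ℕ) ≠ 0)]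
    rw [show 2*(m+2+d+1) - (m+2) - 1 = m+2*d+1+1+1 by omega,
      show m+2+d+1 - (m+2) = d+1 by omega,
      show 2*(m+2+d) - (m+2) - 1 = m+2*d+1 by omega,
      show m+2+d - (m+2) = d by omega,
      show m+2-1 = m+1 by omega, show m+1-1 = m by omega,
      show 2*(m+2+d) - (m+1) - 1 = m+2*d+1+1 by omega,
      show m+2+d - (m+1) = d+1 by omega,
      neg_two_zpow (m+2) (m+2+d+1) (by omega), neg_two_zpow (m+2) (m+2+d) (by omega),
      neg_two_zpow (m+1) (m+2+d) (by omega),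
      show m+2+d+1-(m+2) = d+1 by omega, show m+2+d-(m+2) = d by omega,
      show m+2+d-(m+1) = d+1 by omega,
      Nat.factorial_succ (m+2*d+1+1), Nat.factorial_succ (m+2*d+1),
      Nat.factorial_succ (d), Nat.factorial_succ m]
    have hf : ((m+2*d+1).factorial : ℚ) ≠ 0 := by exact_mod_cast Nat.factorial_ne_zero _
    have hf2 : ((d).factorial : ℚ) ≠ 0 := by exact_mod_cast Nat.factorial_ne_zero _
    have hf3 : ((m).factorial : ℚ) ≠ 0 := by exact_mod_cast Nat.factorial_ne_zero _
    have hp2 : ((-2:ℚ))^d ≠ 0 := by positivity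
    push_cast
    rw [pow_succ]
    field_simp
    ring

lemma combine_sums {M : Type*} [AddCommMonoid M] (k : ℕ) (hk : 1 ≤ k) (L A B : ℕ → M)
    (h1 : L 1 = A 1) (htop : L (k+1) = B k)
    (hmid : ∀ ℓ, 2 ≤ ℓ → ℓ ≤ k → L ℓ = A ℓ + B (ℓ-1)) :
    ∑ ℓ ∈ Finset.Icc 1 (k+1), L ℓ = ∑ ℓ ∈ Finset.Icc 1 k, (B ℓ + A ℓ) := by
  have e1 : ∑ ℓ ∈ Finset.Icc 1 (k+1), L ℓ
      = L 1 + ∑ ℓ ∈ Finset.Ioc 1 k, L ℓ + L (k+1) := by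
    rw [Finset.sum_Icc_succ_top (by omega : 1 ≤ k+1),
      Finset.Icc_eq_cons_Ioc (by omega : 1 ≤ k), Finset.sum_cons]
  have e2 : ∑ ℓ ∈ Finset.Icc 1 k, A ℓ = A 1 + ∑ ℓ ∈ Finset.Ioc 1 k, A ℓ := by
    rw [Finset.Icc_eq_cons_Ioc (by omega : 1 ≤ k), Finset.sum_cons]
  have e3 : ∑ ℓ ∈ Finset.Icc 2 (k+1), B (ℓ-1) = ∑ ℓ ∈ Finset.Icc 1 k, B ℓ := by
    rw [← Finset.map_add_right_Icc 1 k 1, Finset.sum_map]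
    exact Finset.sum_congr rfl fun x hx => by simp
  have e4 : ∑ ℓ ∈ Finset.Icc 2 (k+1), B (ℓ-1)
      = ∑ ℓ ∈ Finset.Ioc 1 k, B (ℓ-1) + B k := by
    rw [Finset.sum_Icc_succ_top (by omega : 2 ≤ k+1),
      show Finset.Icc 2 k = Finset.Ioc 1 k from by rw [← Finset.Icc_add_one_left_eq_Ioc]; rfl,
      show k+1-1 = k from rfl]
  have e5 : ∑ ℓ ∈ Finset.Ioc 1 k, L ℓ = ∑ ℓ ∈ Finset.Ioc 1 k, (A ℓ + B (ℓ-1)) :=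
    Finset.sum_congr rfl fun ℓ hℓ => hmid ℓ (Finset.mem_Ioc.mp hℓ).1
      (Finset.mem_Ioc.mp hℓ).2
  rw [e1, e5, Finset.sum_add_distrib, Finset.sum_add_distrib, ← e3, e4, e2, h1, htop]
  abel

section
variable {E : Type*} [NormedAddCommGroup E] [NormedSpace ℝ E]

lemma hasDerivAt_iterated (U : Set ℝ) (hU : IsOpen U) (f : ℝ → E) (n : ℕ)
    (hf : ContDiffOn ℝ (n+1 : ℕ) f U) (x : ℝ) (hx : x ∈ U) (m : ℕ) (hm : m ≤ n) :
    HasDerivAt (iteratedDerivWithin m f U) (iteratedDerivWithin (m+1) f U x) x := by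
  have hd : DifferentiableOn ℝ (iteratedDerivWithin m f U) U :=
    hf.differentiableOn_iteratedDerivWithin (by exact_mod_cast Nat.lt_succ_of_le hm)
      hU.uniqueDiffOn
  have hda := (hd x hx).differentiableAt (hU.mem_nhds hx)
  rw [iteratedDerivWithin_succ, derivWithin_of_isOpen hU hx]
  exact hda.hasDerivAt

theorem aux_main (U : Set ℝ) (hU : IsOpen U)
    (g : ℝ → E) (h : ℝ → E) (hh : ∀ β : ℝ, h β = g (β ^ 2)) :
    ∀ k : ℕ, 1 ≤ k → ContDiffOn ℝ k g U → ∀ β : ℝ, β ≠ 0 → β ^ 2 ∈ U →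
      iteratedDerivWithin k g U (β ^ 2) =
        ((2 : ℝ) ^ (-(k : ℤ))) •
          ∑ ℓ ∈ Finset.Icc 1 k,
            (((coeffA k ℓ : ℝ)) * β ^ ((ℓ : ℤ) - 2 * (k : ℤ))) •
              iteratedDerivWithin ℓ h {β : ℝ | β ^ 2 ∈ U} β := by
  set V : Set ℝ := {β : ℝ | β ^ 2 ∈ U} with hVdef
  have hV : IsOpen V := hU.preimage (continuous_pow 2)
  intro k hk
  induction k, hk using Nat.le_induction with
  | base =>
    intro hg β hβ0 hβU
    have hβV : β ∈ V := hβU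
    have hsq : HasDerivAt (fun b : ℝ => b ^ 2) (2 * β) β := by
      simpa using hasDerivAt_pow 2 β
    have hgd : HasDerivAt g (iteratedDerivWithin 1 g U (β ^ 2)) (β ^ 2) := by
      have := hasDerivAt_iterated U hU g 0 (by exact_mod_cast hg) (β ^ 2) hβU 0 le_rfl
      simpa [iteratedDerivWithin_zero] using this
    have hhd : HasDerivAt h ((2 * β) • iteratedDerivWithin 1 g U (β ^ 2)) β := by
      have := hgd.scomp_of_eq β hsq rfl
      exact this.congr_of_eventuallyEq
        (Filter.Eventually.of_forall fun b => by simp [hh b, Function.comp])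
    have h1 : iteratedDerivWithin 1 h V β = (2 * β) • iteratedDerivWithin 1 g U (β ^ 2) := by
      rw [iteratedDerivWithin_one, derivWithin_of_isOpen hV hβV]
      exact hhd.deriv
    rw [Finset.Icc_self, Finset.sum_singleton, h1, smul_smul, smul_smul]
    have hc : coeffA 1 1 = 1 := by norm_num [coeffA]
    nth_rewrite 1 [← one_smul ℝ (iteratedDerivWithin 1 g U (β ^ 2))]
    congr 1
    rw [hc]
    push_cast
    field_simp
  | succ k hk IH =>
    intro hg β hβ0 hβU
    have hβV : β ∈ V := hβU
    have hVu : UniqueDiffOn ℝ V := hV.uniqueDiffOn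
    have hgk : ContDiffOn ℝ k g U := hg.of_le (by exact_mod_cast Nat.le_succ k)
    have hhC : ContDiffOn ℝ (k+1 : ℕ) h V := by
      have hsqC : ContDiff ℝ (k+1 : ℕ) (fun b : ℝ => b ^ 2) := contDiff_id.pow 2
      exact ((hg.comp hsqC.contDiffOn (fun b hb => hb)).congr (fun b hb => hh b))
    have hsq : HasDerivAt (fun b : ℝ => b ^ 2) (2 * β) β := by
      simpa using hasDerivAt_pow 2 β
    -- derivative of LHS
    have hL : HasDerivAt (fun b : ℝ => iteratedDerivWithin k g U (b ^ 2))
        ((2 * β) • iteratedDerivWithin (k+1) g U (β ^ 2)) β := by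
      have := (hasDerivAt_iterated U hU g k hg (β ^ 2) hβU k le_rfl).scomp_of_eq β hsq rfl
      simpa [Function.comp_def] using this
    -- derivative of RHS
    have hR : HasDerivAt
        (fun b : ℝ => ((2:ℝ) ^ (-(k:ℤ))) • ∑ ℓ ∈ Finset.Icc 1 k,
          (((coeffA k ℓ : ℝ)) * b ^ ((ℓ:ℤ) - 2 * (k:ℤ))) • iteratedDerivWithin ℓ h V b)
        (((2:ℝ) ^ (-(k:ℤ))) • ∑ ℓ ∈ Finset.Icc 1 k,
          ((((coeffA k ℓ : ℝ)) * β ^ ((ℓ:ℤ) - 2 * (k:ℤ))) •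
              iteratedDerivWithin (ℓ+1) h V β +
            (((coeffA k ℓ : ℝ)) * ((Int.cast ((ℓ:ℤ) - 2 * (k:ℤ)) : ℝ) * β ^ ((ℓ:ℤ) - 2 * (k:ℤ) - 1))) •
              iteratedDerivWithin ℓ h V β)) β := by
      refine HasDerivAt.const_smul _ (HasDerivAt.fun_sum fun ℓ hℓ => ?_)
      have hℓk : ℓ ≤ k := (Finset.mem_Icc.mp hℓ).2
      exact ((hasDerivAt_zpow ((ℓ:ℤ) - 2 * (k:ℤ)) β (Or.inl hβ0)).const_mul _).smul
        (hasDerivAt_iterated V hV h k hhC β hβV ℓ hℓk)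
    have hev : (fun b : ℝ => iteratedDerivWithin k g U (b ^ 2)) =ᶠ[nhds β]
        (fun b : ℝ => ((2:ℝ) ^ (-(k:ℤ))) • ∑ ℓ ∈ Finset.Icc 1 k,
          (((coeffA k ℓ : ℝ)) * b ^ ((ℓ:ℤ) - 2 * (k:ℤ))) • iteratedDerivWithin ℓ h V b) := by
      have hW : IsOpen (V ∩ {b : ℝ | b ≠ 0}) := hV.inter isOpen_ne
      filter_upwards [hW.mem_nhds ⟨hβV, hβ0⟩] with b hb
      exact IH hgk b hb.2 hb.1
    have heq := hL.unique (hR.congr_of_eventuallyEq hev)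
    have hrecR : ∀ ℓ : ℕ, 1 ≤ ℓ → ℓ ≤ k → (coeffA (k+1) ℓ : ℝ)
        = ((ℓ:ℝ) - 2*(k:ℝ)) * (coeffA k ℓ : ℝ) + (coeffA k (ℓ-1) : ℝ) := by
      intro ℓ hℓ1 hℓ2
      exact_mod_cast coeffA_rec k ℓ hℓ1 hℓ2
    have hpow : (2*β) * (2:ℝ)^(-(((k+1):ℕ):ℤ)) = (2:ℝ)^(-(k:ℤ)) * β := by
      push_cast
      rw [show -((k:ℤ)+1) = -(k:ℤ) + (-1) by ring, zpow_add₀ (two_ne_zero) , zpow_neg_one]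
      ring
    have key := combine_sums (M := E) k hk
      (fun ℓ => ((coeffA (k+1) ℓ : ℝ) * β ^ ((ℓ:ℤ) - 2*(k:ℤ) - 1)) •
        iteratedDerivWithin ℓ h V β)
      (fun ℓ => (((coeffA k ℓ : ℝ)) * ((Int.cast ((ℓ:ℤ) - 2 * (k:ℤ)) : ℝ) *
        β ^ ((ℓ:ℤ) - 2 * (k:ℤ) - 1))) • iteratedDerivWithin ℓ h V β)
      (fun ℓ => (((coeffA k ℓ : ℝ)) * β ^ ((ℓ:ℤ) - 2 * (k:ℤ))) •
        iteratedDerivWithin (ℓ+1) h V β)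
      (by
        beta_reduce
        congr 1
        rw [hrecR 1 le_rfl hk, show (1:ℕ)-1 = 0 from rfl, coeffA_zero]
        push_cast
        ring)
      (by
        beta_reduce
        congr 1
        rw [coeffA_diag (k+1) (by omega), coeffA_diag k hk,
          show (((k+1):ℕ):ℤ) - 2*(k:ℤ) - 1 = ((k:ℕ):ℤ) - 2*(k:ℤ) by push_cast; ring])
      (by
        intro ℓ hℓ2 hℓk
        beta_reduce
        rw [show ℓ - 1 + 1 = ℓ by omega,
          show (((ℓ-1):ℕ):ℤ) - 2*(k:ℤ) = (ℓ:ℤ) - 2*(k:ℤ) - 1 by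
            push_cast [Nat.cast_sub (by omega : 1 ≤ ℓ)]; ring,
          ← add_smul]
        congr 1
        rw [hrecR ℓ (by omega) hℓk]
        push_cast
        ring)
    refine smul_right_injective E (mul_ne_zero two_ne_zero hβ0) ?_
    show (2*β) • _ = (2*β) • _
    rw [heq, smul_smul, hpow, mul_smul ((2:ℝ)^(-(k:ℤ))) β]
    congr 1
    rw [Finset.smul_sum]
    have hβR : ∀ ℓ ∈ Finset.Icc 1 (k+1),
        β • (((coeffA (k+1) ℓ : ℝ)) * β ^ ((ℓ:ℤ) - 2 * (((k+1):ℕ):ℤ))) •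
            iteratedDerivWithin ℓ h V β
          = ((coeffA (k+1) ℓ : ℝ) * β ^ ((ℓ:ℤ) - 2*(k:ℤ) - 1)) •
            iteratedDerivWithin ℓ h V β := by
      intro ℓ _
      rw [smul_smul]
      congr 1
      rw [show (ℓ:ℤ) - 2*(k:ℤ) - 1 = ((ℓ:ℤ) - 2*(((k+1):ℕ):ℤ)) + 1 by push_cast; ring,
        zpow_add_one₀ hβ0]
      ring
    rw [Finset.sum_congr rfl hβR]
    exact key.symm
end

/-- One-variable content of formula (3.2) in Proposition 4.2: if `h(β) = g(β²)`, then
`g^{(k)}(β²) = 2^{−k} ∑_{ℓ=1}^{k} a_ℓ^{(k)} β^{ℓ−2k} h^{(ℓ)}(β)` for `β ≠ 0` with `β² ∈ U`. -/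
theorem iteratedDeriv_sq_eq_sum (E : Type*) [NormedAddCommGroup E] [NormedSpace ℝ E]
    (U : Set ℝ) (hU : IsOpen U) (k : ℕ) (hk : 1 ≤ k)
    (g : ℝ → E) (hg : ContDiffOn ℝ k g U)
    (h : ℝ → E) (hh : ∀ β : ℝ, h β = g (β ^ 2)) :
    ∀ β : ℝ, β ≠ 0 → β ^ 2 ∈ U →
      iteratedDerivWithin k g U (β ^ 2) =
        ((2 : ℝ) ^ (-(k : ℤ))) •
          ∑ ℓ ∈ Finset.Icc 1 k,
            (((coeffA k ℓ : ℝ)) * β ^ ((ℓ : ℤ) - 2 * (k : ℤ))) •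
              iteratedDerivWithin ℓ h {β : ℝ | β ^ 2 ∈ U} β := by
  exact aux_main U hU g h hh k hk hg
end

section
/- For all integers k ≥ 1 and h with 0 ≤ h ≤ k−1, one has ∑_{ℓ=1}^{k} (−2)^{ℓ} · ((2k−ℓ−1)! / ((ℓ−1)! (k−ℓ)!)) · (2h)_ℓ = 0, where the sum is taken in the rational numbers. -/
open Finset

/-- The coefficient `(2k-ℓ-1)!/((ℓ-1)!(k-ℓ)!)`, extended by zero outside `1 ≤ ℓ ≤ k`. -/
noncomputable def ccAux (k ℓ : ℕ) : ℚ :=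
  if 1 ≤ ℓ ∧ ℓ ≤ k then
    (Nat.factorial (2 * k - ℓ - 1) : ℚ) /
      ((Nat.factorial (ℓ - 1)) * (Nat.factorial (k - ℓ)))
  else 0

/-- Falling factorial `(x)_ℓ`. -/
noncomputable def ffAux (x : ℚ) (ℓ : ℕ) : ℚ := ∏ i ∈ Finset.range ℓ, (x - i)

lemma ccAux_rec (k ℓ : ℕ) (hk : 1 ≤ k) (hℓ : ℓ ≤ k + 1) :
    ccAux (k + 1) ℓ = ccAux k (ℓ - 1) + 2 * ((2 * k - ℓ : ℕ) : ℚ) * ccAux k ℓ := by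
  rcases Nat.eq_zero_or_pos ℓ with rfl | hℓ1
  · simp [ccAux]
  rcases eq_or_lt_of_le (by omega : 1 ≤ ℓ) with rfl | hℓ2
  · -- ℓ = 1
    obtain ⟨m, rfl⟩ : ∃ m, k = m + 1 := ⟨k - 1, by omega⟩
    have e1 : 2 * (m + 1 + 1) - 1 - 1 = 2 * m + 2 := by omega
    have e2 : 2 * (m + 1) - 1 = 2 * m + 1 := by omega
    have e3 : 2 * (m + 1) - 1 - 1 = 2 * m := by omega
    simp only [ccAux, if_pos (by omega : 1 ≤ 1 ∧ 1 ≤ m + 1 + 1),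
      if_pos (by omega : 1 ≤ 1 ∧ 1 ≤ m + 1), if_neg (by omega : ¬(1 ≤ 0 ∧ 0 ≤ m + 1)),
      e1, e2, e3]
    have f1 : Nat.factorial (2 * m + 2) = (2 * m + 2) * ((2 * m + 1) * Nat.factorial (2 * m)) := by
      rw [show 2*m+2 = (2*m+1)+1 from rfl, Nat.factorial_succ, Nat.factorial_succ]
    have f2 : Nat.factorial (m + 1 + 1 - 1) = (m + 1) * Nat.factorial m := by
      simp [Nat.factorial_succ]
    have f3 : m + 1 - 1 = m := by omega
    rw [f1, f2, f3]
    have h0 : (Nat.factorial m : ℚ) ≠ 0 := by exact_mod_cast Nat.factorial_ne_zero m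
    have h1 : ((m : ℚ) + 1) ≠ 0 := by positivity
    push_cast
    field_simp
    ring
  rcases eq_or_lt_of_le hℓ with hℓ3 | hℓ3
  · -- ℓ = k + 1
    subst hℓ3
    have e1 : 2 * (k + 1) - (k + 1) - 1 = k := by omega
    have e2 : k + 1 - (k + 1) = 0 := by omega
    have e3 : k + 1 - 1 = k := by omega
    have e4 : 2 * k - k - 1 = k - 1 := by omega
    have e5 : k - k = 0 := by omega
    simp only [ccAux, if_pos (by omega : 1 ≤ k + 1 ∧ k + 1 ≤ k + 1),
      if_pos (by omega : 1 ≤ k ∧ k ≤ k), if_neg (by omega : ¬(1 ≤ k + 1 ∧ k + 1 ≤ k)),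
      e1, e2, e3, e4, e5]
    have h0 : (Nat.factorial k : ℚ) ≠ 0 := by exact_mod_cast Nat.factorial_ne_zero k
    have h1 : (Nat.factorial (k - 1) : ℚ) ≠ 0 := by exact_mod_cast Nat.factorial_ne_zero _
    field_simp
    simp
  · -- 2 ≤ ℓ ≤ k
    obtain ⟨a, rfl⟩ : ∃ a, ℓ = a + 2 := ⟨ℓ - 2, by omega⟩
    obtain ⟨b, rfl⟩ : ∃ b, k = a + b + 2 := ⟨k - a - 2, by omega⟩
    have e1 : 2 * (a + b + 2 + 1) - (a + 2) - 1 = a + 2 * b + 3 := by omega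
    have e2 : a + 2 - 1 = a + 1 := by omega
    have e3 : a + b + 2 + 1 - (a + 2) = b + 1 := by omega
    have e4 : 2 * (a + b + 2) - (a + 1) - 1 = a + 2 * b + 2 := by omega
    have e5 : a + 1 - 1 = a := by omega
    have e6 : a + b + 2 - (a + 1) = b + 1 := by omega
    have e7 : 2 * (a + b + 2) - (a + 2) - 1 = a + 2 * b + 1 := by omega
    have e8 : a + b + 2 - (a + 2) = b := by omega
    have e9 : 2 * (a + b + 2) - (a + 2) = a + 2 * b + 2 := by omega
    simp only [ccAux, if_pos (by omega : 1 ≤ a + 2 ∧ a + 2 ≤ a + b + 2 + 1),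
      if_pos (by omega : 1 ≤ a + 1 ∧ a + 1 ≤ a + b + 2),
      if_pos (by omega : 1 ≤ a + 2 ∧ a + 2 ≤ a + b + 2),
      e1, e2, e3, e4, e5, e6, e7, e8, e9]
    have f1 : Nat.factorial (a + 2 * b + 3) = (a + 2 * b + 3) * Nat.factorial (a + 2 * b + 2) := by
      rw [show a + 2*b+3 = (a+2*b+2)+1 from rfl, Nat.factorial_succ]
    have f2 : Nat.factorial (a + 2 * b + 2) = (a + 2 * b + 2) * Nat.factorial (a + 2 * b + 1) := by
      rw [show a + 2*b+2 = (a+2*b+1)+1 from rfl, Nat.factorial_succ]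
    have f3 : Nat.factorial (a + 1) = (a + 1) * Nat.factorial a := Nat.factorial_succ a
    have f4 : Nat.factorial (b + 1) = (b + 1) * Nat.factorial b := Nat.factorial_succ b
    rw [f1, f2, f3, f4]
    have h0 : (Nat.factorial a : ℚ) ≠ 0 := by exact_mod_cast Nat.factorial_ne_zero a
    have h1 : (Nat.factorial b : ℚ) ≠ 0 := by exact_mod_cast Nat.factorial_ne_zero b
    have h2 : (Nat.factorial (a + 2 * b + 1) : ℚ) ≠ 0 := by
      exact_mod_cast Nat.factorial_ne_zero _
    push_cast
    field_simp
    ring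

lemma key_identity (k : ℕ) (hk : 1 ≤ k) (x : ℚ) :
    ∑ ℓ ∈ Finset.range (k + 1), (-2 : ℚ) ^ ℓ * ccAux k ℓ * ffAux x ℓ
      = (-2 : ℚ) ^ k * ∏ i ∈ Finset.range k, (x - 2 * i) := by
  induction k, hk using Nat.le_induction with
  | base =>
    simp [ccAux, ffAux, Finset.sum_range_succ]
  | succ k hk ih =>
    have hrec : ∀ ℓ ∈ Finset.range (k + 2),
        (-2 : ℚ) ^ ℓ * ccAux (k + 1) ℓ * ffAux x ℓ
          = (-2 : ℚ) ^ ℓ * ccAux k (ℓ - 1) * ffAux x ℓ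
            + (-2 : ℚ) ^ ℓ * (2 * ((2 * k - ℓ : ℕ) : ℚ) * ccAux k ℓ) * ffAux x ℓ := by
      intro ℓ hℓ
      rw [ccAux_rec k ℓ hk (by simpa using Finset.mem_range_succ_iff.mp hℓ)]
      ring
    rw [Finset.sum_congr rfl hrec, Finset.sum_add_distrib]
    have hT1 : ∑ ℓ ∈ Finset.range (k + 2),
        (-2 : ℚ) ^ ℓ * ccAux k (ℓ - 1) * ffAux x ℓ
          = ∑ j ∈ Finset.range (k + 1), (-2 : ℚ) ^ (j + 1) * ccAux k j * ffAux x (j + 1) := by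
      rw [Finset.sum_range_succ']
      simp [ccAux]
    have hT2 : ∑ ℓ ∈ Finset.range (k + 2),
        (-2 : ℚ) ^ ℓ * (2 * ((2 * k - ℓ : ℕ) : ℚ) * ccAux k ℓ) * ffAux x ℓ
          = ∑ ℓ ∈ Finset.range (k + 1),
              (-2 : ℚ) ^ ℓ * (2 * ((2 * k - ℓ : ℕ) : ℚ) * ccAux k ℓ) * ffAux x ℓ := by
      rw [Finset.sum_range_succ]
      have : ccAux k (k + 1) = 0 := by simp [ccAux]
      simp [this]
    rw [hT1, hT2, ← Finset.sum_add_distrib]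
    have hcomb : ∀ j ∈ Finset.range (k + 1),
        (-2 : ℚ) ^ (j + 1) * ccAux k j * ffAux x (j + 1)
          + (-2 : ℚ) ^ j * (2 * ((2 * k - j : ℕ) : ℚ) * ccAux k j) * ffAux x j
          = (-2) * (x - 2 * k) * ((-2 : ℚ) ^ j * ccAux k j * ffAux x j) := by
      intro j hj
      have hj' : j ≤ k := Finset.mem_range_succ_iff.mp hj
      have hcast : ((2 * k - j : ℕ) : ℚ) = 2 * (k : ℚ) - j := by
        have : j ≤ 2 * k := by omega
        push_cast [Nat.cast_sub this]
        ring
      have hff : ffAux x (j + 1) = ffAux x j * (x - j) := by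
        simp [ffAux, Finset.prod_range_succ]
      rw [hcast, hff]
      ring
    rw [Finset.sum_congr rfl hcomb, ← Finset.mul_sum, ih]
    rw [Finset.prod_range_succ]
    ring

/-- Identity from the proof of Lemma 4.3:
`∑_{ℓ=1}^{k} (−2)^ℓ (2k−ℓ−1)!/((ℓ−1)!(k−ℓ)!) (2h)_ℓ = 0` for `0 ≤ h ≤ k−1`,
where `(n)_ℓ = n(n−1)⋯(n−ℓ+1)` is the falling factorial. -/
theorem sum_falling_factorial_eq_zero (k : ℕ) (hk : 1 ≤ k) (h : ℕ) (hh : h ≤ k - 1) :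
    ∑ ℓ ∈ Finset.Icc 1 k,
      (-2 : ℚ) ^ ℓ *
        ((Nat.factorial (2 * k - ℓ - 1) : ℚ) /
          ((Nat.factorial (ℓ - 1)) * (Nat.factorial (k - ℓ)))) *
        (∏ i ∈ Finset.range ℓ, ((2 * h : ℚ) - (i : ℚ))) = 0 := by
  have hx : ∑ ℓ ∈ Finset.Icc 1 k,
      (-2 : ℚ) ^ ℓ *
        ((Nat.factorial (2 * k - ℓ - 1) : ℚ) /
          ((Nat.factorial (ℓ - 1)) * (Nat.factorial (k - ℓ)))) *
        (∏ i ∈ Finset.range ℓ, ((2 * h : ℚ) - (i : ℚ)))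
      = ∑ ℓ ∈ Finset.range (k + 1), (-2 : ℚ) ^ ℓ * ccAux k ℓ * ffAux (2 * h) ℓ := by
    have hins : Finset.range (k + 1) = insert 0 (Finset.Icc 1 k) := by
      ext j; simp [Finset.mem_range, Finset.mem_Icc]; omega
    rw [hins, Finset.sum_insert (by simp)]
    have h0 : (-2 : ℚ) ^ 0 * ccAux k 0 * ffAux (2 * h) 0 = 0 := by simp [ccAux]
    rw [h0, zero_add]
    refine Finset.sum_congr rfl fun ℓ hℓ => ?_
    rw [Finset.mem_Icc] at hℓ
    simp only [ccAux, if_pos (And.intro hℓ.1 hℓ.2), ffAux]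
  rw [hx, key_identity k hk]
  have hhk : h < k := by omega
  have : ∏ i ∈ Finset.range k, ((2 * h : ℚ) - 2 * i) = 0 := by
    apply Finset.prod_eq_zero (Finset.mem_range.mpr hhk)
    ring
  rw [this, mul_zero]
end

section
/- For all integers k ≥ 1 and all natural numbers h, one has ∑_{ℓ=1}^{k} (−2)^{ℓ} · ((2k−ℓ−1)! / ((ℓ−1)! (k−ℓ)!)) · (2h)_ℓ = (−4)^k · ∏_{ℓ=0}^{k−1} (h−ℓ), where both sides are taken in the rational numbers (equivalently, in the integers after clearing denominators). -/
private def cfq (k j : ℕ) : ℚ :=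
  (-2) ^ (1 + j) * ((Nat.factorial (2 * k - j - 2) : ℚ) /
    ((Nat.factorial j) * (Nat.factorial (k - 1 - j))))

private lemma factq_ne (n : ℕ) : ((Nat.factorial n : ℚ)) ≠ 0 := by
  exact_mod_cast Nat.factorial_ne_zero n

private lemma keyA (m h : ℕ) :
    ∑ j ∈ Finset.range (m + 1),
        cfq (m + 1) j * (∏ i ∈ Finset.range (1 + j), ((2 * h : ℚ) - (i : ℚ))) =
      (-4) ^ (m + 1) * ∏ ℓ ∈ Finset.range (m + 1), ((h : ℚ) - (ℓ : ℚ)) := by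
  induction m with
  | zero =>
    simp [cfq, Nat.factorial]
    ring
  | succ m ih =>
    have ptarget : (-4 : ℚ) ^ (m + 1 + 1) * ∏ ℓ ∈ Finset.range (m + 1 + 1), ((h : ℚ) - (ℓ : ℚ))
        = ∑ j ∈ Finset.range (m + 1),
            (-2 * cfq (m + 1) j * (∏ i ∈ Finset.range (2 + j), ((2 * h : ℚ) - (i : ℚ)))
              + ((4 * m + 2 : ℚ) - 2 * j) * cfq (m + 1) j *
                  (∏ i ∈ Finset.range (1 + j), ((2 * h : ℚ) - (i : ℚ)))) := by
      have step : ∀ j ∈ Finset.range (m + 1),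
          (-2 * cfq (m + 1) j * (∏ i ∈ Finset.range (2 + j), ((2 * h : ℚ) - (i : ℚ)))
            + ((4 * m + 2 : ℚ) - 2 * j) * cfq (m + 1) j *
                (∏ i ∈ Finset.range (1 + j), ((2 * h : ℚ) - (i : ℚ))))
          = (-4) * ((h : ℚ) - (m + 1)) *
              (cfq (m + 1) j * (∏ i ∈ Finset.range (1 + j), ((2 * h : ℚ) - (i : ℚ)))) := by
        intro j _
        rw [show 2 + j = (1 + j) + 1 from by omega, Finset.prod_range_succ]
        push_cast
        ring
      rw [Finset.sum_congr rfl step, ← Finset.mul_sum, ih, Finset.prod_range_succ, pow_succ]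
      push_cast
      ring
    rw [ptarget, Finset.sum_add_distrib,
      Finset.sum_range_succ' (fun j => cfq (m + 1 + 1) j *
        (∏ i ∈ Finset.range (1 + j), ((2 * h : ℚ) - (i : ℚ)))) (m + 1),
      Finset.sum_range_succ (fun i => cfq (m + 1 + 1) (i + 1) *
        (∏ x ∈ Finset.range (1 + (i + 1)), ((2 * h : ℚ) - (x : ℚ)))) m,
      Finset.sum_range_succ (fun j => -2 * cfq (m + 1) j *
        (∏ i ∈ Finset.range (2 + j), ((2 * h : ℚ) - (i : ℚ)))) m,
      Finset.sum_range_succ' (fun j => ((4 * m + 2 : ℚ) - 2 * j) * cfq (m + 1) j *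
        (∏ i ∈ Finset.range (1 + j), ((2 * h : ℚ) - (i : ℚ)))) m]
    have hB : cfq (m + 1 + 1) (m + 1) *
          (∏ x ∈ Finset.range (1 + (m + 1)), ((2 * h : ℚ) - (x : ℚ)))
        = -2 * cfq (m + 1) m * (∏ i ∈ Finset.range (2 + m), ((2 * h : ℚ) - (i : ℚ))) := by
      rw [show 1 + (m + 1) = 2 + m from by omega]
      unfold cfq
      rw [show 2 * (m + 1 + 1) - (m + 1) - 2 = m + 1 from by omega,
        show (m + 1 + 1) - 1 - (m + 1) = 0 from by omega,
        show 2 * (m + 1) - m - 2 = m from by omega,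
        show (m + 1) - 1 - m = 0 from by omega]
      field_simp
      ring
    have hC : cfq (m + 1 + 1) 0 * (∏ i ∈ Finset.range (1 + 0), ((2 * h : ℚ) - (i : ℚ)))
        = ((4 * m + 2 : ℚ) - 2 * ((0 : ℕ) : ℚ)) * cfq (m + 1) 0 *
            (∏ i ∈ Finset.range (1 + 0), ((2 * h : ℚ) - (i : ℚ))) := by
      unfold cfq
      rw [show 2 * (m + 1 + 1) - 0 - 2 = (2 * m + 1) + 1 from by omega,
        show (m + 1 + 1) - 1 - 0 = m + 1 from by omega,
        show 2 * (m + 1) - 0 - 2 = 2 * m from by omega,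
        show (m + 1) - 1 - 0 = m from by omega]
      simp only [Nat.factorial_succ]
      have h1 := factq_ne m
      have h2 := factq_ne (2 * m)
      field_simp
      push_cast
      ring
    have hA : ∀ i ∈ Finset.range m,
        cfq (m + 1 + 1) (i + 1) *
            (∏ x ∈ Finset.range (1 + (i + 1)), ((2 * h : ℚ) - (x : ℚ)))
          = -2 * cfq (m + 1) i * (∏ x ∈ Finset.range (2 + i), ((2 * h : ℚ) - (x : ℚ)))
            + ((4 * m + 2 : ℚ) - 2 * ((i + 1 : ℕ) : ℚ)) * cfq (m + 1) (i + 1) *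
                (∏ x ∈ Finset.range (1 + (i + 1)), ((2 * h : ℚ) - (x : ℚ))) := by
      intro i hi
      rw [Finset.mem_range] at hi
      obtain ⟨t, rfl⟩ : ∃ t, m = i + t + 1 := ⟨m - i - 1, by omega⟩
      rw [show 1 + (i + 1) = 2 + i from by omega]
      unfold cfq
      rw [show 2 * (i + t + 1 + 1 + 1) - (i + 1) - 2 = ((i + 2 * t + 1) + 1) + 1 from by omega,
        show (i + t + 1 + 1 + 1) - 1 - (i + 1) = t + 1 from by omega,
        show 2 * (i + t + 1 + 1) - i - 2 = (i + 2 * t + 1) + 1 from by omega,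
        show (i + t + 1 + 1) - 1 - i = t + 1 from by omega,
        show 2 * (i + t + 1 + 1) - (i + 1) - 2 = i + 2 * t + 1 from by omega,
        show (i + t + 1 + 1) - 1 - (i + 1) = t from by omega]
      simp only [Nat.factorial_succ]
      have h1 := factq_ne i
      have h2 := factq_ne t
      have h3 := factq_ne (i + 2 * t + 1)
      field_simp
      push_cast
      ring
    rw [Finset.sum_congr rfl hA, Finset.sum_add_distrib, hB, hC]
    ring

/-- Identity (4.5) from the Remark following Lemma 4.3:
`∑_{ℓ=1}^{k} (−2)^ℓ (2k−ℓ−1)!/((ℓ−1)!(k−ℓ)!) (2h)_ℓ = (−4)^k ∏_{ℓ=0}^{k−1} (h−ℓ)`,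
where `(n)_ℓ = n(n−1)⋯(n−ℓ+1)` is the falling factorial. -/
theorem sum_falling_factorial_eq_prod (k : ℕ) (hk : 1 ≤ k) (h : ℕ) :
    ∑ ℓ ∈ Finset.Icc 1 k,
      (-2 : ℚ) ^ ℓ *
        ((Nat.factorial (2 * k - ℓ - 1) : ℚ) /
          ((Nat.factorial (ℓ - 1)) * (Nat.factorial (k - ℓ)))) *
        (∏ i ∈ Finset.range ℓ, ((2 * h : ℚ) - (i : ℚ))) =
      (-4 : ℚ) ^ k * ∏ ℓ ∈ Finset.range k, ((h : ℚ) - (ℓ : ℚ)) := by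
  obtain ⟨m, rfl⟩ : ∃ m, k = m + 1 := ⟨k - 1, by omega⟩
  rw [← Finset.Ico_add_one_right_eq_Icc, Finset.sum_Ico_eq_sum_range]
  simp only [show m + 1 + 1 - 1 = m + 1 from rfl]
  rw [← keyA m h]
  apply Finset.sum_congr rfl
  intro j hj
  unfold cfq
  rw [show 2 * (m + 1) - (1 + j) - 1 = 2 * (m + 1) - j - 2 from by omega,
    show (1 + j) - 1 = j from by omega,
    show (m + 1) - (1 + j) = (m + 1) - 1 - j from by omega]
end

section
/- Let k ≥ 1 be an integer and let F : ℂ → ℂ be an entire function (differentiable over ℂ everywhere). Suppose there exist functions c_0, …, c_{k−1} : ℝ → ℝ such that Im F(α + iβ) = ∑_{ℓ=0}^{k−1} c_ℓ(α) · β^{2ℓ+1} for all real α, β. Then F is a polynomial function of degree at most 2k, i.e. there exists a complex polynomial P with deg P ≤ 2k and F(z) = P(z) for all z ∈ ℂ. -/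
open Complex

private lemma diffIter (F : ℂ → ℂ) (hF : Differentiable ℂ F) (n : ℕ) :
    Differentiable ℂ (iteratedDeriv n F) :=
  hF.contDiff.differentiable_iteratedDeriv n
    (lt_of_lt_of_le (WithTop.coe_lt_top (n : ℕ∞)) le_rfl)

private lemma imIter (F : ℂ → ℂ) (hF : Differentiable ℂ F) (α : ℝ) :
    ∀ n : ℕ, ∀ β : ℝ, iteratedDeriv n (fun t : ℝ => (F (α + t * Complex.I)).im) β
      = (Complex.I ^ n * iteratedDeriv n F (α + β * Complex.I)).im := by
  intro n
  induction n with
  | zero => intro β; simp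
  | succ n ih =>
    intro β
    rw [iteratedDeriv_succ, funext ih]
    have hz : HasDerivAt (fun z : ℂ => Complex.I ^ n * iteratedDeriv n F (α + z * Complex.I))
        (Complex.I ^ n * (iteratedDeriv (n+1) F (α + (β:ℂ) * Complex.I) * Complex.I)) (β : ℂ) := by
      have hin : HasDerivAt (fun z : ℂ => (α : ℂ) + z * Complex.I) Complex.I (β : ℂ) := by
        simpa using ((hasDerivAt_id (β : ℂ)).mul_const Complex.I).const_add (α : ℂ)
      have hout := ((diffIter F hF n) (α + (β:ℂ) * Complex.I)).hasDerivAt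
      have := (hout.comp (β : ℂ) hin).const_mul (Complex.I ^ n)
      simpa [iteratedDeriv_succ, Function.comp] using this
    have hr := hz.comp_ofReal
    have him := Complex.imCLM.hasFDerivAt.comp_hasDerivAt β hr
    have him' : HasDerivAt (fun x : ℝ => (Complex.I ^ n * iteratedDeriv n F (α + x * Complex.I)).im)
        (Complex.I ^ n * (iteratedDeriv (n+1) F (α + (β:ℂ) * Complex.I) * Complex.I)).im β := him
    rw [him'.deriv]
    rw [pow_succ]
    ring_nf

private lemma polyIter : ∀ (n : ℕ) (p : Polynomial ℝ),
    iteratedDeriv n (fun x => p.eval x) = fun x => (Polynomial.derivative^[n] p).eval x := by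
  intro n
  induction n with
  | zero => intro p; simp
  | succ n ih =>
    intro p
    rw [iteratedDeriv_succ', funext (fun x => (Polynomial.deriv (p := p) (x := x))), ih,
      Function.iterate_succ_apply]

private lemma polyAnti (P : Polynomial ℂ) :
    ∃ R : Polynomial ℂ, R.natDegree ≤ P.natDegree + 1 ∧ Polynomial.derivative R = P := by
  refine ⟨∑ i ∈ Finset.range (P.natDegree + 1),
    Polynomial.C (P.coeff i / (i + 1)) * Polynomial.X ^ (i + 1), ?_, ?_⟩
  · refine (Polynomial.natDegree_sum_le _ _).trans ?_
    simp only [Finset.fold_max_le]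
    refine ⟨by omega, fun i hi => ?_⟩
    refine (Polynomial.natDegree_C_mul_le _ _).trans ?_
    simp only [Polynomial.natDegree_X_pow]
    simp only [Finset.mem_range] at hi; omega
  · rw [map_sum]
    conv_rhs => rw [P.as_sum_range]
    refine Finset.sum_congr rfl fun i hi => ?_
    rw [Polynomial.derivative_C_mul_X_pow, ← Polynomial.C_mul_X_pow_eq_monomial]
    have hne : ((i : ℂ) + 1) ≠ 0 := Nat.cast_add_one_ne_zero i
    push_cast
    rw [div_mul_cancel₀ _ hne]

private lemma polyOfIter : ∀ (n : ℕ) (G : ℂ → ℂ), Differentiable ℂ G →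
    (∀ z, iteratedDeriv (n + 1) G z = 0) →
    ∃ P : Polynomial ℂ, P.natDegree ≤ n ∧ ∀ z : ℂ, G z = P.eval z := by
  intro n
  induction n with
  | zero =>
    intro G hG h0
    refine ⟨Polynomial.C (G 0), by simp, fun z => ?_⟩
    simp only [Polynomial.eval_C]
    exact is_const_of_deriv_eq_zero hG (fun x => by simpa [iteratedDeriv_one] using h0 x) z 0
  | succ n ih =>
    intro G hG h0
    have hd : Differentiable ℂ (deriv G) := by
      simpa [iteratedDeriv_one] using diffIter G hG 1
    have hd0 : ∀ z, iteratedDeriv (n + 1) (deriv G) z = 0 := fun z => by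
      have := h0 z
      rwa [iteratedDeriv_succ'] at this
    obtain ⟨P, hPdeg, hP⟩ := ih (deriv G) hd hd0
    obtain ⟨R, hRdeg, hRder⟩ := polyAnti P
    have hconst : ∀ z : ℂ, G z - R.eval z = G 0 - R.eval 0 := by
      intro z
      have hdsub : Differentiable ℂ (fun z : ℂ => G z - R.eval z) :=
        hG.sub (Polynomial.differentiable R)
      refine is_const_of_deriv_eq_zero hdsub (fun x => ?_) z 0
      have h1 : HasDerivAt (fun z => G z - R.eval z)
            (deriv G x - (Polynomial.derivative R).eval x) x :=
        ((hG x).hasDerivAt).sub (R.hasDerivAt x)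
      rw [h1.deriv, hRder, ← hP x, sub_self]
    refine ⟨R + Polynomial.C (G 0 - R.eval 0), ?_, fun z => ?_⟩
    · refine (Polynomial.natDegree_add_le _ _).trans ?_
      simp only [Polynomial.natDegree_C, max_le_iff]
      omega
    · simp only [Polynomial.eval_add, Polynomial.eval_C]
      linear_combination hconst z

/-- Lemma 4.5 of the paper (main conclusion): an entire function whose imaginary part has
the form `∑_{ℓ=0}^{k−1} c_ℓ(α) β^{2ℓ+1}` is a polynomial of degree at most `2k`. -/
theorem entire_with_odd_poly_imaginary_part_is_polynomial (k : ℕ) (hk : 1 ≤ k)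
    (F : ℂ → ℂ) (hF : Differentiable ℂ F) (c : ℕ → ℝ → ℝ)
    (him : ∀ α β : ℝ,
      (F (α + β * Complex.I)).im = ∑ ℓ ∈ Finset.range k, c ℓ α * β ^ (2 * ℓ + 1)) :
    ∃ P : Polynomial ℂ, P.natDegree ≤ 2 * k ∧ ∀ z : ℂ, F z = P.eval z := by
  set h := iteratedDeriv (2 * k) F with hh
  have hhd : Differentiable ℂ h := diffIter F hF (2 * k)
  -- Step 1: the imaginary part of `h` vanishes identically.
  have him0 : ∀ z : ℂ, (h z).im = 0 := by
    intro z
    set α := z.re with hα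
    set β := z.im with hβ
    set Q : Polynomial ℝ :=
      ∑ ℓ ∈ Finset.range k, Polynomial.C (c ℓ α) * Polynomial.X ^ (2 * ℓ + 1) with hQdef
    have hfun : (fun t : ℝ => (F (α + t * Complex.I)).im) = fun t => Q.eval t := by
      funext t
      rw [him α t, hQdef]
      simp [Polynomial.eval_finset_sum]
    have h1 := imIter F hF α (2 * k) β
    rw [hfun, polyIter] at h1
    have hQ : Polynomial.derivative^[2 * k] Q = 0 := by
      apply Polynomial.iterate_derivative_eq_zero
      refine lt_of_le_of_lt ((Polynomial.natDegree_sum_le _ _).trans ?_)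
        (show 2 * k - 1 < 2 * k by omega)
      rw [Finset.fold_max_le]
      refine ⟨by omega, fun i hi => ?_⟩
      refine (Polynomial.natDegree_C_mul_le _ _).trans ?_
      simp only [Polynomial.natDegree_X_pow]
      simp only [Finset.mem_range] at hi
      omega
    rw [hQ] at h1
    simp only [Polynomial.eval_zero] at h1
    have hIpow : Complex.I ^ (2 * k) = (((-1 : ℝ) ^ k : ℝ) : ℂ) := by
      rw [pow_mul, Complex.I_sq]
      push_cast
      ring
    rw [hIpow, Complex.im_ofReal_mul] at h1
    have hz : (α : ℂ) + (β : ℂ) * Complex.I = z := Complex.re_add_im z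
    rw [hz] at h1
    have hne : ((-1 : ℝ) ^ k) ≠ 0 := by positivity
    have := h1.symm
    rcases mul_eq_zero.mp this with h' | h'
    · exact absurd h' hne
    · exact h'
  -- Step 2: `h` has vanishing derivative, by Liouville applied to `exp (I * h)`.
  have hd1 : ∀ z : ℂ, deriv h z = 0 := by
    intro z
    have hb : Differentiable ℂ (fun z => Complex.exp (Complex.I * h z)) :=
      (hhd.const_mul Complex.I).cexp
    have hbound : Bornology.IsBounded (Set.range fun z => Complex.exp (Complex.I * h z)) := by
      rw [isBounded_iff_forall_norm_le]
      refine ⟨1, ?_⟩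
      rintro x ⟨w, rfl⟩
      rw [Complex.norm_exp]
      simp [Complex.mul_re, him0 w]
    have hconstexp : ∀ w : ℂ, Complex.exp (Complex.I * h w) = Complex.exp (Complex.I * h 0) :=
      fun w => hb.apply_eq_apply_of_bounded hbound w 0
    have h2 : HasDerivAt (fun w => Complex.exp (Complex.I * h w))
        (Complex.exp (Complex.I * h z) * (Complex.I * deriv h z)) z :=
      (((hhd z).hasDerivAt).const_mul Complex.I).cexp
    have h3 : deriv (fun w => Complex.exp (Complex.I * h w)) z = 0 := by
      rw [funext hconstexp]
      simp
    rw [h2.deriv] at h3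
    simpa [Complex.exp_ne_zero, Complex.I_ne_zero] using h3
  have hiter : ∀ z : ℂ, iteratedDeriv (2 * k + 1) F z = 0 := by
    intro z
    rw [iteratedDeriv_succ, ← hh]
    exact hd1 z
  exact polyOfIter (2 * k) F hF hiter
end

section
/- Let k ≥ 1 be an integer and let F : ℂ → ℂ be an entire function. Suppose there exist functions c_0, …, c_{k−1} : ℝ → ℝ such that Im F(α + iβ) = ∑_{ℓ=0}^{k−1} c_ℓ(α) · β^{2ℓ+1} for all real α, β. Then there exist real numbers s_0, …, s_{2k−1} such that for every ℓ with 0 ≤ ℓ ≤ k−1 and every α ∈ ℝ, c_ℓ(α) = (−1)^{ℓ} · ((2k+1)!/(2ℓ+1)!) · ∑_{η=0}^{2k−2ℓ−1} (α^η / η!) · s_{η+2ℓ}. -/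
open Complex

private lemma polyEval_iteratedDeriv (p : Polynomial ℝ) (n : ℕ) (x : ℝ) :
    iteratedDeriv n (fun y => p.eval y) x = (Polynomial.derivative^[n] p).eval x := by
  induction n generalizing p x with
  | zero => simp
  | succ n ih =>
    rw [iteratedDeriv_succ']
    have : deriv (fun y => p.eval y) = fun y => (Polynomial.derivative p).eval y := by
      funext y; exact Polynomial.deriv (p := p)
    rw [this, ih, Function.iterate_succ_apply]

private lemma vertDeriv (g : ℂ → ℂ) (hg : Differentiable ℂ g) (α β : ℝ) :
    HasDerivAt (fun t : ℝ => g ((α : ℂ) + t * I)) (I * deriv g ((α : ℂ) + β * I)) β := by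
  have h1 : HasDerivAt (fun t : ℝ => (α : ℂ) + t * I) I β := by
    have h0 : HasDerivAt (fun t : ℝ => (t : ℂ)) 1 β := Complex.ofRealCLM.hasDerivAt
    simpa using (h0.mul_const I).const_add (α : ℂ)
  have h2 : HasDerivAt g (deriv g ((α : ℂ) + β * I)) ((α : ℂ) + β * I) :=
    (hg _).hasDerivAt
  simpa [Function.comp_def, smul_eq_mul] using h2.scomp β h1

private lemma horizDeriv (g : ℂ → ℂ) (hg : Differentiable ℂ g) (α : ℝ) :
    HasDerivAt (fun t : ℝ => (g (t : ℂ)).re) ((deriv g (α : ℂ)).re) α := by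
  have h1 : HasDerivAt (fun t : ℝ => (t : ℂ)) 1 α := Complex.ofRealCLM.hasDerivAt
  have h2 : HasDerivAt g (deriv g (α : ℂ)) (α : ℂ) := (hg _).hasDerivAt
  have h3 : HasDerivAt (fun t : ℝ => g (t : ℂ)) (deriv g (α : ℂ)) α := by
    simpa [Function.comp_def, smul_eq_mul] using h2.scomp α h1
  simpa [Function.comp_def] using Complex.reCLM.hasFDerivAt.comp_hasDerivAt α h3

private lemma vertIterIm (F : ℂ → ℂ)
    (hDn : ∀ n, Differentiable ℂ (iteratedDeriv n F)) (n : ℕ) (α β : ℝ) :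
    iteratedDeriv n (fun t : ℝ => (F ((α : ℂ) + t * I)).im) β
      = (I ^ n * iteratedDeriv n F ((α : ℂ) + β * I)).im := by
  induction n generalizing β with
  | zero => simp
  | succ n ih =>
    rw [iteratedDeriv_succ]
    have hfun : iteratedDeriv n (fun t : ℝ => (F ((α : ℂ) + t * I)).im)
        = fun t : ℝ => (I ^ n * iteratedDeriv n F ((α : ℂ) + t * I)).im :=
      funext fun t => ih t
    rw [hfun]
    have h1 : HasDerivAt (fun t : ℝ => I ^ n * iteratedDeriv n F ((α : ℂ) + t * I))
        (I ^ (n+1) * iteratedDeriv (n+1) F ((α : ℂ) + β * I)) β := by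
      have h := (vertDeriv (iteratedDeriv n F) (hDn n) α β).const_mul (I ^ n)
      rw [← iteratedDeriv_succ] at h
      convert h using 1
      · rfl
      ring
    have h2 := Complex.imCLM.hasFDerivAt.comp_hasDerivAt β h1
    have h2' : HasDerivAt (fun t : ℝ => (I ^ n * iteratedDeriv n F ((α : ℂ) + t * I)).im)
        ((I ^ (n+1) * iteratedDeriv (n+1) F ((α : ℂ) + β * I)).im) β := by
      simpa [Function.comp_def] using h2
    exact h2'.deriv

private lemma I_pow_odd_mul_im (n : ℕ) (w : ℂ) :
    ((I : ℂ) ^ (2*n+1) * w).im = (-1 : ℝ)^n * w.re := by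
  induction n with
  | zero => simp [Complex.mul_im]
  | succ n ih =>
    rw [show 2*(n+1)+1 = (2*n+1)+2 from by ring, pow_add, Complex.I_sq, mul_neg_one,
      neg_mul, Complex.neg_im, ih, pow_succ]
    ring

private lemma taylor_aux (N : ℕ) (u : ℕ → ℝ → ℝ)
    (hU : ∀ n x, HasDerivAt (u n) (u (n+1) x) x)
    (hz : ∀ x, u N x = 0) :
    ∀ m, m ≤ N → ∀ x : ℝ,
      u (N - m) x = ∑ η ∈ Finset.range (m+1), x^η / η.factorial * u (N - m + η) 0 := by
  intro m
  induction m with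
  | zero =>
    intro _ x
    simpa using (hz x).trans (hz 0).symm
  | succ m ih =>
    intro hm x
    have hm' : m ≤ N := Nat.le_of_succ_le hm
    have hIH := ih hm'
    have hNm : N - m = (N - (m+1)) + 1 := by omega
    set n := N - (m+1) with hn
    have hIH' : ∀ y : ℝ, u (n+1) y
        = ∑ η ∈ Finset.range (m+1), y^η / η.factorial * u (n+1+η) 0 := by
      intro y
      have h := hIH y
      rw [hNm] at h
      exact h
    set G : ℝ → ℝ := fun y => ∑ η ∈ Finset.range (m+2), y^η / η.factorial * u (n+η) 0 with hG
    have hGd : ∀ y : ℝ, HasDerivAt G (u (n+1) y) y := by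
      intro y
      have h1 : HasDerivAt G
          (∑ η ∈ Finset.range (m+2), ((η : ℝ) * y^(η-1) / η.factorial) * u (n+η) 0) y := by
        apply HasDerivAt.fun_sum
        intro η _
        exact ((hasDerivAt_pow η y).div_const _).mul_const _
      convert h1 using 1
      rw [hIH' y]
      rw [Finset.sum_range_succ' (fun η => ((η : ℝ) * y^(η-1) / η.factorial) * u (n+η) 0) (m+1)]
      have h0 : ((0 : ℕ) : ℝ) * y^(0-1) / (Nat.factorial 0) * u (n+0) 0 = 0 := by simp
      rw [h0, add_zero]
      refine Finset.sum_congr rfl fun i _ => ?_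
      have hi : ((i : ℝ) + 1) ≠ 0 := by positivity
      rw [show n + (i+1) = n + 1 + i from by omega, Nat.factorial_succ]
      push_cast
      rw [mul_div_mul_left _ _ hi]
    have hconst : ∀ a b : ℝ, u n a - G a = u n b - G b := by
      have hd : Differentiable ℝ (fun y => u n y - G y) :=
        fun y => ((hU n y).sub (hGd y)).differentiableAt
      have hd0 : ∀ y, deriv (fun y => u n y - G y) y = 0 := fun y => by
        rw [((hU n y).fun_sub (hGd y)).deriv, sub_self]
      intro a b
      exact is_const_of_deriv_eq_zero hd hd0 a b
    have hG0 : G 0 = u n 0 := by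
      show (∑ η ∈ Finset.range (m + 2), (0:ℝ) ^ η / ↑η.factorial * u (n + η) 0) = u n 0
      rw [Finset.sum_eq_single 0]
      · simp
      · intro b _ hb
        simp [zero_pow hb]
      · intro h
        exact absurd (Finset.mem_range.mpr (by omega)) h
    have hx := hconst x 0
    rw [hG0, sub_self] at hx
    have : u n x = G x := by linarith [sub_eq_zero.mp hx]
    simpa [hG] using this

/-- The coefficient description (4.6) in Lemma 4.5 of the paper: if an entire function
has imaginary part `∑_{ℓ=0}^{k−1} c_ℓ(α) β^{2ℓ+1}`, then
`c_ℓ(α) = (−1)^ℓ (2k+1)!/(2ℓ+1)! ∑_{η=0}^{2k−2ℓ−1} (α^η/η!) s_{η+2ℓ}`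
for some real numbers `s_0, …, s_{2k−1}`. -/
theorem entire_with_odd_poly_imaginary_part_coefficients (k : ℕ) (hk : 1 ≤ k)
    (F : ℂ → ℂ) (hF : Differentiable ℂ F) (c : ℕ → ℝ → ℝ)
    (him : ∀ α β : ℝ,
      (F (α + β * Complex.I)).im = ∑ ℓ ∈ Finset.range k, c ℓ α * β ^ (2 * ℓ + 1)) :
    ∃ s : ℕ → ℝ, ∀ ℓ < k, ∀ α : ℝ,
      c ℓ α = (-1 : ℝ) ^ ℓ *
        ((Nat.factorial (2 * k + 1) : ℝ) / (Nat.factorial (2 * ℓ + 1))) *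
        ∑ η ∈ Finset.range (2 * k - 2 * ℓ),
          (α ^ η / (Nat.factorial η : ℝ)) * s (η + 2 * ℓ) := by
  have hA : AnalyticOnNhd ℂ F Set.univ :=
    hF.differentiableOn.analyticOnNhd isOpen_univ
  have hDn : ∀ n, Differentiable ℂ (iteratedDeriv n F) := by
    intro n z
    have h := (hA.iterated_deriv n) z (Set.mem_univ z)
    rw [← iteratedDeriv_eq_iterate] at h
    exact h.differentiableAt
  -- the key coefficient identity
  have key : ∀ (n : ℕ) (α : ℝ),
      (I ^ n * iteratedDeriv n F ((α : ℂ))).im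
        = (n.factorial : ℝ) *
          (∑ ℓ ∈ Finset.range k,
            Polynomial.C (c ℓ α) * Polynomial.X ^ (2*ℓ+1) : Polynomial ℝ).coeff n := by
    intro n α
    set p : Polynomial ℝ :=
      ∑ ℓ ∈ Finset.range k, Polynomial.C (c ℓ α) * Polynomial.X ^ (2*ℓ+1) with hp
    have hfun : (fun t : ℝ => (F ((α : ℂ) + t * I)).im) = fun t => p.eval t := by
      funext t
      rw [him α t, hp]
      simp [Polynomial.eval_finset_sum]
    have h0 := vertIterIm F hDn n α 0
    rw [hfun, polyEval_iteratedDeriv] at h0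
    rw [show ((α : ℂ) + ((0:ℝ) : ℂ) * I) = (α : ℂ) by simp] at h0
    rw [← h0, ← Polynomial.coeff_zero_eq_eval_zero, Polynomial.coeff_iterate_derivative]
    simp [Nat.descFactorial_self, nsmul_eq_mul, mul_comm]
  -- the (2k+1)-st derivative has vanishing real part on ℝ
  have hz : ∀ x : ℝ, (iteratedDeriv (2*k+1) F ((x : ℂ))).re = 0 := by
    intro x
    have h := key (2*k+1) x
    have hco : (∑ ℓ ∈ Finset.range k,
        Polynomial.C (c ℓ x) * Polynomial.X ^ (2*ℓ+1) : Polynomial ℝ).coeff (2*k+1) = 0 := by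
      rw [Polynomial.finset_sum_coeff]
      refine Finset.sum_eq_zero fun ℓ hℓ => ?_
      rw [Polynomial.coeff_C_mul, Polynomial.coeff_X_pow]
      have hne : ¬ (2*k+1 = 2*ℓ+1) := by
        have := Finset.mem_range.mp hℓ; omega
      simp [hne]
      intro h'; exact absurd (by omega : 2*k+1 = 2*ℓ+1) hne
    rw [hco, mul_zero, I_pow_odd_mul_im] at h
    have h2 : ((-1:ℝ)^k) ≠ 0 := pow_ne_zero _ (by norm_num)
    exact (mul_eq_zero.mp h).resolve_left h2
  -- the coefficients in terms of real parts of derivatives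
  have hcl : ∀ ℓ, ℓ < k → ∀ α : ℝ,
      c ℓ α = (-1:ℝ)^ℓ * (iteratedDeriv (2*ℓ+1) F ((α : ℂ))).re
        / ((2*ℓ+1).factorial : ℝ) := by
    intro ℓ hℓ α
    have h := key (2*ℓ+1) α
    have hco : (∑ j ∈ Finset.range k,
        Polynomial.C (c j α) * Polynomial.X ^ (2*j+1) : Polynomial ℝ).coeff (2*ℓ+1)
          = c ℓ α := by
      rw [Polynomial.finset_sum_coeff]
      rw [Finset.sum_eq_single ℓ]
      · simp
      · intro b _ hbne
        rw [Polynomial.coeff_C_mul, Polynomial.coeff_X_pow]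
        have hne : ¬ (2*ℓ+1 = 2*b+1) := by omega
        simp [hne]
        intro h'; exact absurd (by omega : 2*ℓ+1 = 2*b+1) hne
      · intro h'
        exact absurd (Finset.mem_range.mpr hℓ) h'
    rw [hco, I_pow_odd_mul_im] at h
    have hfac : (((2*ℓ+1).factorial : ℕ) : ℝ) ≠ 0 :=
      Nat.cast_ne_zero.mpr (Nat.factorial_ne_zero _)
    rw [eq_div_iff hfac]
    linarith [h]
  -- derivative structure of u
  have hU : ∀ (n : ℕ) (x : ℝ),
      HasDerivAt (fun t : ℝ => (iteratedDeriv n F ((t : ℂ))).re)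
        ((iteratedDeriv (n+1) F ((x : ℂ))).re) x := by
    intro n x
    have h := horizDeriv (iteratedDeriv n F) (hDn n) x
    rwa [← iteratedDeriv_succ] at h
  have ht := taylor_aux (2*k+1) (fun n t => (iteratedDeriv n F ((t : ℂ))).re) hU hz
  refine ⟨fun j => (iteratedDeriv (j+1) F (((0:ℝ) : ℂ))).re / ((2*k+1).factorial : ℝ), ?_⟩
  intro ℓ hℓ α
  have hm : 2*k - 2*ℓ ≤ 2*k+1 := by omega
  have hT := ht (2*k - 2*ℓ) hm α
  beta_reduce at hT
  rw [show 2*k+1-(2*k-2*ℓ) = 2*ℓ+1 from by omega] at hT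
  rw [Finset.sum_range_succ] at hT
  rw [show 2*ℓ+1+(2*k-2*ℓ) = 2*k+1 from by omega] at hT
  rw [hz 0, mul_zero, add_zero] at hT
  rw [hcl ℓ hℓ α, hT]
  beta_reduce
  rw [Finset.mul_sum, Finset.sum_div, Finset.mul_sum]
  refine Finset.sum_congr rfl fun η _ => ?_
  rw [show η + 2*ℓ + 1 = 2*ℓ+1+η from by omega]
  have hfac1 : (((2*ℓ+1).factorial : ℕ) : ℝ) ≠ 0 :=
    Nat.cast_ne_zero.mpr (Nat.factorial_ne_zero _)
  have hfac2 : (((2*k+1).factorial : ℕ) : ℝ) ≠ 0 :=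
    Nat.cast_ne_zero.mpr (Nat.factorial_ne_zero _)
  field_simp
end

section
/- Let k ≥ 1 be an integer and let c_0, …, c_{k−1} : ℝ → ℝ be twice differentiable functions. Define v : ℝ² → ℝ by v(α, β) = ∑_{ℓ=0}^{k−1} c_ℓ(α) · β^{2ℓ+1}. Then v is harmonic on ℝ² (i.e. ∂²v/∂α² + ∂²v/∂β² = 0 everywhere) if and only if c_ℓ''(α) = −(2ℓ+2)(2ℓ+3) · c_{ℓ+1}(α) for all α ∈ ℝ and all ℓ with 0 ≤ ℓ ≤ k−2, and c_{k−1}''(α) = 0 for all α ∈ ℝ. -/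
lemma coeff_zero_of_sum_eq_zero (k : ℕ) (a : ℕ → ℝ)
    (h : ∀ β : ℝ, ∑ ℓ ∈ Finset.range k, a ℓ * β ^ (2 * ℓ + 1) = 0) :
    ∀ ℓ < k, a ℓ = 0 := by
  intro ℓ hℓ
  set p : Polynomial ℝ := ∑ j ∈ Finset.range k, Polynomial.C (a j) * Polynomial.X ^ (2 * j + 1)
    with hp
  have hp0 : p = 0 := by
    apply Polynomial.funext
    intro β
    simp [hp, Polynomial.eval_finset_sum, h β]
  have : p.coeff (2 * ℓ + 1) = a ℓ := by
    rw [hp, Polynomial.finset_sum_coeff]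
    rw [Finset.sum_eq_single ℓ]
    · simp [Polynomial.coeff_X_pow]
    · intro j hj hne
      simp only [Polynomial.coeff_C_mul, Polynomial.coeff_X_pow]
      have : ¬(2 * ℓ + 1 = 2 * j + 1) := by omega
      simp [this]
      intro h; exact absurd h.symm hne
    · intro hℓ'; exact absurd (Finset.mem_range.mpr hℓ) hℓ'
  rw [hp0] at this
  simpa using this.symm


/-- System (4.7) in the proof of Lemma 4.5: `v(α,β) = ∑_{ℓ=0}^{k−1} c_ℓ(α) β^{2ℓ+1}` is
harmonic on `ℝ²` if and only if `c_ℓ'' = −(2ℓ+2)(2ℓ+3) c_{ℓ+1}` for `0 ≤ ℓ ≤ k−2`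
and `c_{k−1}'' = 0`. -/
theorem harmonicity_iff_system (k : ℕ) (hk : 1 ≤ k) (c : ℕ → ℝ → ℝ)
    (hc : ∀ ℓ < k, Differentiable ℝ (c ℓ) ∧ Differentiable ℝ (deriv (c ℓ)))
    (v : ℝ → ℝ → ℝ)
    (hv : ∀ α β : ℝ, v α β = ∑ ℓ ∈ Finset.range k, c ℓ α * β ^ (2 * ℓ + 1)) :
    (∀ α β : ℝ,
        deriv (deriv (fun a : ℝ => v a β)) α + deriv (deriv (fun b : ℝ => v α b)) β = 0)
      ↔ ((∀ ℓ : ℕ, ℓ + 1 ≤ k - 1 → ∀ α : ℝ,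
            deriv (deriv (c ℓ)) α = -((2 * ℓ + 2) * (2 * ℓ + 3) : ℝ) * c (ℓ + 1) α) ∧
          (∀ α : ℝ, deriv (deriv (c (k - 1))) α = 0)) := by
  set A : ℕ → ℝ → ℝ := fun ℓ α =>
    deriv (deriv (c ℓ)) α +
      (if ℓ + 1 < k then ((2 * ℓ + 2) * (2 * ℓ + 3) : ℝ) * c (ℓ + 1) α else 0) with hA
  -- x-direction second derivative
  have hx : ∀ β α : ℝ, deriv (deriv (fun a : ℝ => v a β)) α
      = ∑ ℓ ∈ Finset.range k, deriv (deriv (c ℓ)) α * β ^ (2 * ℓ + 1) := by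
    intro β α
    have e1 : (fun a : ℝ => v a β) = fun a => ∑ ℓ ∈ Finset.range k, c ℓ a * β ^ (2 * ℓ + 1) :=
      funext fun a => hv a β
    rw [e1]
    have e2 : deriv (fun a => ∑ ℓ ∈ Finset.range k, c ℓ a * β ^ (2 * ℓ + 1))
        = fun a => ∑ ℓ ∈ Finset.range k, deriv (c ℓ) a * β ^ (2 * ℓ + 1) := by
      funext a
      rw [deriv_fun_sum (fun i hi =>
        ((hc i (Finset.mem_range.mp hi)).1.differentiableAt).mul_const _)]
      exact Finset.sum_congr rfl fun ℓ hℓ =>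
        deriv_mul_const (hc ℓ (Finset.mem_range.mp hℓ)).1.differentiableAt _
    rw [e2, deriv_fun_sum (fun i hi =>
        ((hc i (Finset.mem_range.mp hi)).2.differentiableAt).mul_const _)]
    exact Finset.sum_congr rfl fun ℓ hℓ =>
      deriv_mul_const (hc ℓ (Finset.mem_range.mp hℓ)).2.differentiableAt _
  -- y-direction second derivative
  have hy : ∀ α β : ℝ, deriv (deriv (fun b : ℝ => v α b)) β
      = ∑ ℓ ∈ Finset.range k,
          c ℓ α * (((2 * ℓ + 1 : ℕ) : ℝ) * (((2 * ℓ : ℕ) : ℝ) * β ^ (2 * ℓ - 1))) := by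
    intro α β
    have e1 : (fun b : ℝ => v α b) = fun b => ∑ ℓ ∈ Finset.range k, c ℓ α * b ^ (2 * ℓ + 1) :=
      funext fun b => hv α b
    rw [e1]
    have e2 : deriv (fun b : ℝ => ∑ ℓ ∈ Finset.range k, c ℓ α * b ^ (2 * ℓ + 1))
        = fun b => ∑ ℓ ∈ Finset.range k, c ℓ α * (((2 * ℓ + 1 : ℕ) : ℝ) * b ^ (2 * ℓ)) := by
      funext b
      rw [deriv_fun_sum (fun i hi => (differentiableAt_pow _).const_mul _)]
      refine Finset.sum_congr rfl fun ℓ hℓ => ?_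
      rw [deriv_const_mul _ (differentiableAt_pow _), deriv_pow_field]
      norm_num
    rw [e2, deriv_fun_sum (fun i hi => ((differentiableAt_pow _).const_mul _).const_mul _)]
    refine Finset.sum_congr rfl fun ℓ hℓ => ?_
    rw [deriv_const_mul _ ((differentiableAt_pow _).const_mul _),
      deriv_const_mul _ (differentiableAt_pow _), deriv_pow_field]
  -- reindexing of the y-part
  have hre : ∀ α β : ℝ,
      ∑ ℓ ∈ Finset.range k,
          c ℓ α * (((2 * ℓ + 1 : ℕ) : ℝ) * (((2 * ℓ : ℕ) : ℝ) * β ^ (2 * ℓ - 1)))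
        = ∑ ℓ ∈ Finset.range k,
            (if ℓ + 1 < k then ((2 * ℓ + 2) * (2 * ℓ + 3) : ℝ) * c (ℓ + 1) α else 0)
              * β ^ (2 * ℓ + 1) := by
    intro α β
    obtain ⟨m, rfl⟩ : ∃ m, k = m + 1 := ⟨k - 1, by omega⟩
    rw [Finset.sum_range_succ' _ m, Finset.sum_range_succ _ m]
    have h0 : c 0 α * (((2 * 0 + 1 : ℕ) : ℝ) * (((2 * 0 : ℕ) : ℝ) * β ^ (2 * 0 - 1))) = 0 := by
      norm_num
    have hm : (if m + 1 < m + 1 then ((2 * m + 2) * (2 * m + 3) : ℝ) * c (m + 1) α else 0)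
        * β ^ (2 * m + 1) = 0 := by simp
    rw [h0, hm, add_zero, add_zero]
    refine Finset.sum_congr rfl fun i hi => ?_
    have hi' : i + 1 < m + 1 := by
      have := Finset.mem_range.mp hi; omega
    rw [if_pos hi']
    have : 2 * (i + 1) - 1 = 2 * i + 1 := by omega
    rw [this]
    push_cast
    ring
  -- the combined key identity
  have key : ∀ α β : ℝ,
      deriv (deriv (fun a : ℝ => v a β)) α + deriv (deriv (fun b : ℝ => v α b)) β
        = ∑ ℓ ∈ Finset.range k, A ℓ α * β ^ (2 * ℓ + 1) := by
    intro α β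
    rw [hx β α, hy α β, hre α β, ← Finset.sum_add_distrib]
    exact Finset.sum_congr rfl fun ℓ hℓ => by rw [hA]; ring
  -- equivalence with coefficientwise vanishing
  have step : (∀ α β : ℝ,
      deriv (deriv (fun a : ℝ => v a β)) α + deriv (deriv (fun b : ℝ => v α b)) β = 0)
      ↔ ∀ α : ℝ, ∀ ℓ < k, A ℓ α = 0 := by
    constructor
    · intro h α
      exact coeff_zero_of_sum_eq_zero k (fun ℓ => A ℓ α)
        (fun β => by rw [← key α β]; exact h α β)
    · intro h α β
      rw [key α β]
      exact Finset.sum_eq_zero fun ℓ hℓ => by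
        rw [h α ℓ (Finset.mem_range.mp hℓ), zero_mul]
  rw [step]
  constructor
  · intro h
    constructor
    · intro ℓ hℓ α
      have hℓ' : ℓ + 1 < k := by omega
      have := h α ℓ (by omega)
      rw [hA] at this
      simp only [if_pos hℓ'] at this
      linarith
    · intro α
      have := h α (k - 1) (by omega)
      rw [hA] at this
      have hkk : ¬(k - 1 + 1 < k) := by omega
      simp only [if_neg hkk, add_zero] at this
      exact this
  · intro ⟨h1, h2⟩ α ℓ hℓ
    rw [hA]
    by_cases hℓ1 : ℓ + 1 < k
    · simp only [if_pos hℓ1]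
      have := h1 ℓ (by omega) α
      linarith
    · have : ℓ = k - 1 := by omega
      subst this
      simp only [if_neg hℓ1, add_zero]
      exact h2 α
end

section
/- Let k ≥ 1 be an integer and let c_0, …, c_{k−1} : ℝ → ℝ be smooth functions satisfying c_ℓ''(α) = −(2ℓ+2)(2ℓ+3) · c_{ℓ+1}(α) for all α ∈ ℝ and all 0 ≤ ℓ ≤ k−2, and c_{k−1}''(α) = 0 for all α ∈ ℝ. Then there exist real numbers s_0, …, s_{2k−1} such that for every 0 ≤ ℓ ≤ k−1 and every α ∈ ℝ, c_ℓ(α) = (−1)^{ℓ} · ((2k+1)!/(2ℓ+1)!) · ∑_{η=0}^{2k−2ℓ−1} (α^η / η!) · s_{η+2ℓ}. -/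
noncomputable def polyP (N : ℕ) (a : ℕ → ℝ) (x : ℝ) : ℝ :=
  ∑ η ∈ Finset.range N, x ^ η / (Nat.factorial η : ℝ) * a η

lemma polyP_contDiff (N : ℕ) (a : ℕ → ℝ) : ContDiff ℝ (⊤:ℕ∞) (polyP N a) := by
  unfold polyP
  apply ContDiff.sum
  intro i _
  exact ((contDiff_id.pow i).div_const _).mul contDiff_const

lemma polyP_hasDerivAt (N : ℕ) (a : ℕ → ℝ) (x : ℝ) :
    HasDerivAt (polyP N a) (polyP (N - 1) (fun η => a (η + 1)) x) x := by
  cases N with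
  | zero =>
    have h0 : polyP 0 a = fun _ => 0 := by funext y; simp [polyP]
    rw [h0]; simpa [polyP] using hasDerivAt_const x (0 : ℝ)
  | succ n =>
    have h : ∀ η ∈ Finset.range (n + 1),
        HasDerivAt (fun y : ℝ => y ^ η / (Nat.factorial η : ℝ) * a η)
          ((η : ℝ) * x ^ (η - 1) / (Nat.factorial η : ℝ) * a η) x := fun η _ =>
      ((hasDerivAt_pow η x).div_const _).mul_const _
    have hs := HasDerivAt.fun_sum h
    have : (∑ η ∈ Finset.range (n + 1),
        (η : ℝ) * x ^ (η - 1) / (Nat.factorial η : ℝ) * a η)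
        = polyP n (fun η => a (η + 1)) x := by
      rw [Finset.sum_range_succ']
      simp only [polyP, Nat.cast_zero, zero_mul, zero_div, zero_mul, add_zero]
      apply Finset.sum_congr rfl
      intro η _
      have : (Nat.factorial (η + 1) : ℝ) = (η + 1) * Nat.factorial η := by
        rw [Nat.factorial_succ]; push_cast; ring
      rw [this, Nat.add_sub_cancel]
      have h1 : (Nat.factorial η : ℝ) ≠ 0 := Nat.cast_ne_zero.mpr (Nat.factorial_ne_zero η)
      have h2 : ((η : ℝ) + 1) ≠ 0 := by positivity
      field_simp
      simp only [Nat.cast_add, Nat.cast_one]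
      ring
    rw [this] at hs
    exact hs

lemma polyP_deriv (N : ℕ) (a : ℕ → ℝ) :
    deriv (polyP N a) = polyP (N - 1) (fun η => a (η + 1)) := by
  funext x; exact (polyP_hasDerivAt N a x).deriv

lemma polyP_zero_eval (N : ℕ) (hN : 1 ≤ N) (a : ℕ → ℝ) : polyP N a 0 = a 0 := by
  cases N with
  | zero => omega
  | succ n =>
    unfold polyP
    rw [Finset.sum_range_succ']
    simp

lemma eq_of_deriv2_eq (f g : ℝ → ℝ) (hf : ContDiff ℝ (⊤:ℕ∞) f) (hg : ContDiff ℝ (⊤:ℕ∞) g)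
    (h2 : ∀ x, deriv (deriv f) x = deriv (deriv g) x)
    (h0 : f 0 = g 0) (h1 : deriv f 0 = deriv g 0) : ∀ x, f x = g x := by
  have hfd : Differentiable ℝ f := hf.differentiable (by norm_num)
  have hgd : Differentiable ℝ g := hg.differentiable (by norm_num)
  have hf' : ContDiff ℝ (⊤:ℕ∞) (deriv f) := (contDiff_infty_iff_deriv.mp hf).2
  have hg' : ContDiff ℝ (⊤:ℕ∞) (deriv g) := (contDiff_infty_iff_deriv.mp hg).2
  have hd : Differentiable ℝ (fun x => f x - g x) := hfd.sub hgd
  have hdd : ∀ x, deriv (fun x => f x - g x) x = deriv f x - deriv g x := fun x =>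
    deriv_sub (hfd x) (hgd x)
  have hderivd : Differentiable ℝ (fun x => deriv f x - deriv g x) :=
    (hf'.differentiable (by norm_num)).sub (hg'.differentiable (by norm_num))
  have hconst : ∀ x, deriv f x - deriv g x = 0 := by
    intro x
    have : ∀ y, deriv (fun x => deriv f x - deriv g x) y = 0 := by
      intro y
      rw [deriv_fun_sub (hf'.differentiable (by norm_num) y) (hg'.differentiable (by norm_num) y), h2 y, sub_self]
    have := is_const_of_deriv_eq_zero hderivd this x 0
    rw [this, h1, sub_self]
  intro x
  have hz : ∀ y, deriv (fun x => f x - g x) y = 0 := fun y => by rw [hdd y, hconst y]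
  have := is_const_of_deriv_eq_zero hd hz x 0
  have h0' : f 0 - g 0 = 0 := by rw [h0, sub_self]
  have := this.trans h0'
  linarith

/-- Step in the proof of Lemma 4.5: the solutions of the harmonicity system (4.7) are
exactly the families (4.6), i.e. smooth functions `c_0, …, c_{k−1}` with
`c_ℓ'' = −(2ℓ+2)(2ℓ+3) c_{ℓ+1}` for `0 ≤ ℓ ≤ k−2` and `c_{k−1}'' = 0` have the form
`c_ℓ(α) = (−1)^ℓ (2k+1)!/(2ℓ+1)! ∑_{η=0}^{2k−2ℓ−1} (α^η/η!) s_{η+2ℓ}`. -/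
theorem system_solutions_are_explicit (k : ℕ) (hk : 1 ≤ k) (c : ℕ → ℝ → ℝ)
    (hsmooth : ∀ ℓ < k, ContDiff ℝ (⊤ : ℕ∞) (c ℓ))
    (hsys : ∀ ℓ : ℕ, ℓ + 1 ≤ k - 1 → ∀ α : ℝ,
      deriv (deriv (c ℓ)) α = -((2 * ℓ + 2) * (2 * ℓ + 3) : ℝ) * c (ℓ + 1) α)
    (hlast : ∀ α : ℝ, deriv (deriv (c (k - 1))) α = 0) :
    ∃ s : ℕ → ℝ, ∀ ℓ < k, ∀ α : ℝ,
      c ℓ α = (-1 : ℝ) ^ ℓ *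
        ((Nat.factorial (2 * k + 1) : ℝ) / (Nat.factorial (2 * ℓ + 1))) *
        ∑ η ∈ Finset.range (2 * k - 2 * ℓ),
          (α ^ η / (Nat.factorial η : ℝ)) * s (η + 2 * ℓ) := by
  set s : ℕ → ℝ := fun n =>
    (-1 : ℝ) ^ (n / 2) * (Nat.factorial (2 * (n / 2) + 1) : ℝ) /
      (Nat.factorial (2 * k + 1) : ℝ) *
      (if n % 2 = 0 then c (n / 2) 0 else deriv (c (n / 2)) 0) with hsdef
  have hs0 : ∀ ℓ : ℕ, s (2 * ℓ) =
      (-1 : ℝ) ^ ℓ * (Nat.factorial (2 * ℓ + 1) : ℝ) / (Nat.factorial (2 * k + 1) : ℝ) *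
        c ℓ 0 := by
    intro ℓ
    have h2 : 2 * ℓ / 2 = ℓ := by omega
    have h3 : 2 * ℓ % 2 = 0 := by omega
    simp [hsdef, h2, h3]
  have hs1 : ∀ ℓ : ℕ, s (2 * ℓ + 1) =
      (-1 : ℝ) ^ ℓ * (Nat.factorial (2 * ℓ + 1) : ℝ) / (Nat.factorial (2 * k + 1) : ℝ) *
        deriv (c ℓ) 0 := by
    intro ℓ
    have h2 : (2 * ℓ + 1) / 2 = ℓ := by omega
    have h3 : (2 * ℓ + 1) % 2 = 1 := by omega
    simp [hsdef, h2, h3]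
  refine ⟨s, ?_⟩
  have key : ∀ d : ℕ, ∀ ℓ : ℕ, ℓ < k → k - 1 - ℓ = d → ∀ α : ℝ,
      c ℓ α = (-1 : ℝ) ^ ℓ * ((Nat.factorial (2 * k + 1) : ℝ) / (Nat.factorial (2 * ℓ + 1))) *
        polyP (2 * k - 2 * ℓ) (fun η => s (η + 2 * ℓ)) α := by
    intro d
    induction d with
    | zero =>
      intro ℓ hℓ hd
      have hℓk : ℓ = k - 1 := by omega
      set C : ℝ := (-1 : ℝ) ^ ℓ * ((Nat.factorial (2 * k + 1) : ℝ) / (Nat.factorial (2 * ℓ + 1)))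
        with hC
      set a : ℕ → ℝ := fun η => s (η + 2 * ℓ) with ha
      set N : ℕ := 2 * k - 2 * ℓ with hN
      have hN2 : N = 2 := by omega
      have hCne : C ≠ 0 := by
        rw [hC]
        have : (Nat.factorial (2 * ℓ + 1) : ℝ) ≠ 0 :=
          Nat.cast_ne_zero.mpr (Nat.factorial_ne_zero _)
        have : (Nat.factorial (2 * k + 1) : ℝ) ≠ 0 :=
          Nat.cast_ne_zero.mpr (Nat.factorial_ne_zero _)
        positivity
      have hgd : ∀ x : ℝ, deriv (fun α => C * polyP N a α) x =
          C * polyP (N - 1) (fun η => a (η + 1)) x := by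
        intro x
        exact (HasDerivAt.const_mul C (polyP_hasDerivAt N a x)).deriv
      have hgdd : ∀ x : ℝ, deriv (deriv (fun α => C * polyP N a α)) x =
          C * polyP (N - 2) (fun η => a (η + 2)) x := by
        intro x
        have : deriv (fun α => C * polyP N a α) =
            fun x => C * polyP (N - 1) (fun η => a (η + 1)) x := funext hgd
        rw [this]
        have h := (HasDerivAt.const_mul C
          (polyP_hasDerivAt (N - 1) (fun η => a (η + 1)) x)).deriv
        rw [h]
        congr 1
      apply eq_of_deriv2_eq
      · exact (hsmooth ℓ hℓ).of_le (by simp)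
      · exact contDiff_const.mul (polyP_contDiff N a)
      · intro x
        rw [hgdd x, hℓk, hlast x]
        rw [hN2]
        simp [polyP]
      · rw [polyP_zero_eval N (by omega) a]
        have : a 0 = s (2 * ℓ) := by simp [ha]
        rw [this, hs0 ℓ]
        have hf1 : (Nat.factorial (2 * ℓ + 1) : ℝ) ≠ 0 :=
          Nat.cast_ne_zero.mpr (Nat.factorial_ne_zero _)
        have hf2 : (Nat.factorial (2 * k + 1) : ℝ) ≠ 0 :=
          Nat.cast_ne_zero.mpr (Nat.factorial_ne_zero _)
        rw [hC]
        field_simp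
        ring_nf
        simp [Even.neg_one_pow (⟨ℓ, by ring⟩ : Even (ℓ * 2))]
      · rw [hgd 0, polyP_zero_eval (N - 1) (by omega) _]
        have : a (0 + 1) = s (2 * ℓ + 1) := by simp [ha, add_comm]
        rw [this, hs1 ℓ]
        have hf1 : (Nat.factorial (2 * ℓ + 1) : ℝ) ≠ 0 :=
          Nat.cast_ne_zero.mpr (Nat.factorial_ne_zero _)
        have hf2 : (Nat.factorial (2 * k + 1) : ℝ) ≠ 0 :=
          Nat.cast_ne_zero.mpr (Nat.factorial_ne_zero _)
        rw [hC]
        field_simp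
        ring_nf
        simp [Even.neg_one_pow (⟨ℓ, by ring⟩ : Even (ℓ * 2))]
    | succ d ih =>
      intro ℓ hℓ hd
      have hℓ1 : ℓ + 1 ≤ k - 1 := by omega
      have hih := ih (ℓ + 1) (by omega) (by omega)
      set C : ℝ := (-1 : ℝ) ^ ℓ * ((Nat.factorial (2 * k + 1) : ℝ) / (Nat.factorial (2 * ℓ + 1)))
        with hC
      set a : ℕ → ℝ := fun η => s (η + 2 * ℓ) with ha
      set N : ℕ := 2 * k - 2 * ℓ with hN
      have hgd : ∀ x : ℝ, deriv (fun α => C * polyP N a α) x =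
          C * polyP (N - 1) (fun η => a (η + 1)) x := by
        intro x
        exact (HasDerivAt.const_mul C (polyP_hasDerivAt N a x)).deriv
      have hgdd : ∀ x : ℝ, deriv (deriv (fun α => C * polyP N a α)) x =
          C * polyP (N - 2) (fun η => a (η + 2)) x := by
        intro x
        have : deriv (fun α => C * polyP N a α) =
            fun x => C * polyP (N - 1) (fun η => a (η + 1)) x := funext hgd
        rw [this]
        have h := (HasDerivAt.const_mul C
          (polyP_hasDerivAt (N - 1) (fun η => a (η + 1)) x)).deriv
        rw [h]
        congr 1
      -- factorial identity
      have hfac : (Nat.factorial (2 * (ℓ + 1) + 1) : ℝ) =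
          (2 * ℓ + 3) * ((2 * ℓ + 2) * (Nat.factorial (2 * ℓ + 1) : ℝ)) := by
        have h1 : 2 * (ℓ + 1) + 1 = (2 * ℓ + 2) + 1 := by omega
        rw [h1, Nat.factorial_succ, Nat.factorial_succ]
        push_cast
        ring
      have hCrel : C = -((2 * ℓ + 2) * (2 * ℓ + 3) : ℝ) *
          ((-1 : ℝ) ^ (ℓ + 1) *
            ((Nat.factorial (2 * k + 1) : ℝ) / (Nat.factorial (2 * (ℓ + 1) + 1)))) := by
        rw [hC, hfac, pow_succ]
        have hf1 : (Nat.factorial (2 * ℓ + 1) : ℝ) ≠ 0 :=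
          Nat.cast_ne_zero.mpr (Nat.factorial_ne_zero _)
        have h2 : ((2 : ℝ) * ℓ + 2) ≠ 0 := by positivity
        have h3 : ((2 : ℝ) * ℓ + 3) ≠ 0 := by positivity
        field_simp
      apply eq_of_deriv2_eq
      · exact (hsmooth ℓ hℓ).of_le (by simp)
      · exact contDiff_const.mul (polyP_contDiff N a)
      · intro x
        rw [hgdd x, hsys ℓ hℓ1 x, hih x]
        have hNm : N - 2 = 2 * k - 2 * (ℓ + 1) := by omega
        have haa : (fun η => a (η + 2)) = fun η => s (η + 2 * (ℓ + 1)) := by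
          funext η
          have : η + 2 + 2 * ℓ = η + 2 * (ℓ + 1) := by omega
          simp [ha, this]
        rw [hNm, haa, hCrel]
        ring
      · rw [polyP_zero_eval N (by omega) a]
        have : a 0 = s (2 * ℓ) := by simp [ha]
        rw [this, hs0 ℓ]
        have hf1 : (Nat.factorial (2 * ℓ + 1) : ℝ) ≠ 0 :=
          Nat.cast_ne_zero.mpr (Nat.factorial_ne_zero _)
        have hf2 : (Nat.factorial (2 * k + 1) : ℝ) ≠ 0 :=
          Nat.cast_ne_zero.mpr (Nat.factorial_ne_zero _)
        rw [hC]
        field_simp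
        ring_nf
        simp [Even.neg_one_pow (⟨ℓ, by ring⟩ : Even (ℓ * 2))]
      · rw [hgd 0, polyP_zero_eval (N - 1) (by omega) _]
        have : a (0 + 1) = s (2 * ℓ + 1) := by simp [ha, add_comm]
        rw [this, hs1 ℓ]
        have hf1 : (Nat.factorial (2 * ℓ + 1) : ℝ) ≠ 0 :=
          Nat.cast_ne_zero.mpr (Nat.factorial_ne_zero _)
        have hf2 : (Nat.factorial (2 * k + 1) : ℝ) ≠ 0 :=
          Nat.cast_ne_zero.mpr (Nat.factorial_ne_zero _)
        rw [hC]
        field_simp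
        ring_nf
        simp [Even.neg_one_pow (⟨ℓ, by ring⟩ : Even (ℓ * 2))]
  intro ℓ hℓ α
  rw [key (k - 1 - ℓ) ℓ hℓ rfl α]
  simp [polyP]
end

section
/- Let D ⊆ ℂ be a nonempty open set invariant under complex conjugation such that the associated circular set Ω_D := {q ∈ ℍ : Re(q) + i·|Im(q)| ∈ D} is connected. Let F_0, F_1 : D → ℍ be continuously real-differentiable functions satisfying the stem conditions F_0(conj z) = F_0(z) and F_1(conj z) = −F_1(z) for all z ∈ D, and the Cauchy–Riemann equations ∂F_0/∂α = ∂F_1/∂β and ∂F_0/∂β = −∂F_1/∂α on D (writing z = α + iβ). Let f : Ω_D → ℍ be the induced slice function: f(q) = F_0(α + iβ) + J·F_1(α + iβ), where α = Re(q), β = |Im(q)|, and J = Im(q)/|Im(q)| when Im(q) ≠ 0, while f(q) = F_0(q) when q is real. If f is real-differentiable on Ω_D and satisfies the Cauchy–Riemann–Fueter equation ∂f/∂x_0 + i·(∂f/∂x_1) + j·(∂f/∂x_2) + k·(∂f/∂x_3) = 0 at every point of Ω_D (partial derivatives taken with respect to the real coordinates q = x_0 + x_1 i + x_2 j + x_3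 k, with left multiplication by the quaternion units i, j, k), then f is constant on Ω_D. -/
open Quaternion

/-- The quaternion imaginary units `i`, `j`, `k`. -/
def qI : ℍ[ℝ] := ⟨0, 1, 0, 0⟩
def qJ : ℍ[ℝ] := ⟨0, 0, 1, 0⟩
def qK : ℍ[ℝ] := ⟨0, 0, 0, 1⟩

@[simp] lemma qI_re : qI.re = 0 := rfl
@[simp] lemma qI_imI : qI.imI = 1 := rfl
@[simp] lemma qI_imJ : qI.imJ = 0 := rfl
@[simp] lemma qI_imK : qI.imK = 0 := rfl
@[simp] lemma qJ_re : qJ.re = 0 := rfl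
@[simp] lemma qJ_imI : qJ.imI = 0 := rfl
@[simp] lemma qJ_imJ : qJ.imJ = 1 := rfl
@[simp] lemma qJ_imK : qJ.imK = 0 := rfl
@[simp] lemma qK_re : qK.re = 0 := rfl
@[simp] lemma qK_imI : qK.imI = 0 := rfl
@[simp] lemma qK_imJ : qK.imJ = 0 := rfl
@[simp] lemma qK_imK : qK.imK = 1 := rfl

lemma qI_mul_qI : qI * qI = -1 := by ext <;> simp [Quaternion.re_mul, Quaternion.imI_mul, Quaternion.imJ_mul, Quaternion.imK_mul]
lemma qJ_mul_qJ : qJ * qJ = -1 := by ext <;> simp [Quaternion.re_mul, Quaternion.imI_mul, Quaternion.imJ_mul, Quaternion.imK_mul]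
lemma qK_mul_qK : qK * qK = -1 := by ext <;> simp [Quaternion.re_mul, Quaternion.imI_mul, Quaternion.imJ_mul, Quaternion.imK_mul]

lemma aux_norm_im (q : ℍ[ℝ]) :
    ‖q.im‖ = Real.sqrt (q.imI ^ 2 + q.imJ ^ 2 + q.imK ^ 2) := by
  rw [norm_eq_sqrt_real_inner, Quaternion.inner_self]
  simp [Quaternion.normSq_def']

lemma norm_qI : ‖qI‖ = 1 := by
  have h : qI.im = qI := by ext <;> simp
  have := aux_norm_im qI
  rw [h] at this
  simpa using this

/-- directional derivative determines `fderiv` applied to a vector -/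
lemma aux_dirDeriv (f : ℍ[ℝ] → ℍ[ℝ]) (q v : ℍ[ℝ]) (h : DifferentiableAt ℝ f q)
    {d : ℍ[ℝ]} (hd : HasDerivAt (fun t : ℝ => f (q + t • v)) d 0) :
    fderiv ℝ f q v = d := by
  have hline : HasDerivAt (fun t : ℝ => q + t • v) v 0 := by
    simpa using ((hasDerivAt_id (0:ℝ)).smul_const v).const_add q
  have hF : HasFDerivAt f (fderiv ℝ f q) (q + (0:ℝ) • v) := by simpa using h.hasFDerivAt
  have h2 : HasDerivAt (fun t : ℝ => f (q + t • v)) (fderiv ℝ f q v) 0 := by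
    exact hF.comp_hasDerivAt 0 hline
  exact h2.unique hd

set_option maxHeartbeats 2000000 in
/-- Quaternionic case (m = 3) of Corollary 3.3 of the paper: a slice regular function
(induced by a holomorphic stem function `(F₀, F₁)` on a conjugation-invariant open set
`D ⊆ ℂ` with connected circularization `Ω_D ⊆ ℍ`) which satisfies the
Cauchy–Riemann–Fueter equation on `Ω_D` is constant. -/
theorem slice_regular_monogenic_is_constant
    (D : Set ℂ) (hD : IsOpen D) (hDne : D.Nonempty)
    (hDconj : ∀ z ∈ D, (starRingEnd ℂ) z ∈ D)
    (Ω : Set ℍ[ℝ])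
    (hΩ : Ω = {q : ℍ[ℝ] | ((q.re : ℂ) + (‖q.im‖ : ℂ) * Complex.I) ∈ D})
    (hconn : IsConnected Ω)
    (F₀ F₁ : ℂ → ℍ[ℝ])
    (hF₀ : ContDiffOn ℝ 1 F₀ D) (hF₁ : ContDiffOn ℝ 1 F₁ D)
    (hstem₀ : ∀ z ∈ D, F₀ ((starRingEnd ℂ) z) = F₀ z)
    (hstem₁ : ∀ z ∈ D, F₁ ((starRingEnd ℂ) z) = -F₁ z)
    (hCR₁ : ∀ z ∈ D,
      deriv (fun t : ℝ => F₀ ((t : ℂ) + (z.im : ℂ) * Complex.I)) z.re =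
        deriv (fun t : ℝ => F₁ ((z.re : ℂ) + (t : ℂ) * Complex.I)) z.im)
    (hCR₂ : ∀ z ∈ D,
      deriv (fun t : ℝ => F₀ ((z.re : ℂ) + (t : ℂ) * Complex.I)) z.im =
        - deriv (fun t : ℝ => F₁ ((t : ℂ) + (z.im : ℂ) * Complex.I)) z.re)
    (f : ℍ[ℝ] → ℍ[ℝ])
    (hf_im : ∀ q ∈ Ω, q.im ≠ 0 →
      f q = F₀ ((q.re : ℂ) + (‖q.im‖ : ℂ) * Complex.I) +
        ((‖q.im‖⁻¹ : ℝ) • q.im) * F₁ ((q.re : ℂ) + (‖q.im‖ : ℂ) * Complex.I))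
    (hf_re : ∀ q ∈ Ω, q.im = 0 → f q = F₀ ((q.re : ℂ)))
    (hdiff : ∀ q ∈ Ω, DifferentiableAt ℝ f q)
    (hCRF : ∀ q ∈ Ω,
      fderiv ℝ f q 1 +
        qI * fderiv ℝ f q qI +
        qJ * fderiv ℝ f q qJ +
        qK * fderiv ℝ f q qK = 0) :
    ∃ c : ℍ[ℝ], ∀ q ∈ Ω, f q = c := by
  classical
  have hZcont : Continuous (fun q : ℍ[ℝ] => ((q.re : ℂ) + (‖q.im‖ : ℂ) * Complex.I)) :=
    (Complex.continuous_ofReal.comp Quaternion.continuous_re).add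
      ((Complex.continuous_ofReal.comp (continuous_norm.comp Quaternion.continuous_im)).mul
        continuous_const)
  have hΩopen : IsOpen Ω := by
    rw [hΩ]; exact hD.preimage hZcont
  have hdF₀ : ∀ z ∈ D, HasFDerivAt F₀ (fderiv ℝ F₀ z) z := fun z hz =>
    (((hF₀.differentiableOn one_ne_zero).differentiableAt (hD.mem_nhds hz))).hasFDerivAt
  have hdF₁ : ∀ z ∈ D, HasFDerivAt F₁ (fderiv ℝ F₁ z) z := fun z hz =>
    (((hF₁.differentiableOn one_ne_zero).differentiableAt (hD.mem_nhds hz))).hasFDerivAt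
  -- reformulated Cauchy-Riemann equations
  have hCR₁' : ∀ z ∈ D, fderiv ℝ F₀ z 1 = fderiv ℝ F₁ z Complex.I := by
    intro z hz
    have h1 : HasDerivAt (fun t : ℝ => F₀ ((t:ℂ) + (z.im:ℂ)*Complex.I))
        (fderiv ℝ F₀ z 1) z.re := by
      have hc : HasDerivAt (fun t:ℝ => (t:ℂ) + (z.im:ℂ)*Complex.I) 1 z.re := by
        simpa using (Complex.ofRealCLM.hasDerivAt (x := z.re)).add_const ((z.im:ℂ)*Complex.I)
      have hF : HasFDerivAt F₀ (fderiv ℝ F₀ z) ((z.re:ℂ) + (z.im:ℂ)*Complex.I) := by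
        rw [Complex.re_add_im]; exact hdF₀ z hz
      simpa [Function.comp_def] using hF.comp_hasDerivAt z.re hc
    have h2 : HasDerivAt (fun t : ℝ => F₁ ((z.re:ℂ) + (t:ℂ)*Complex.I))
        (fderiv ℝ F₁ z Complex.I) z.im := by
      have hc : HasDerivAt (fun t:ℝ => (z.re:ℂ) + (t:ℂ)*Complex.I) Complex.I z.im := by
        simpa using ((Complex.ofRealCLM.hasDerivAt (x := z.im)).mul_const Complex.I).const_add
          (z.re:ℂ)
      have hF : HasFDerivAt F₁ (fderiv ℝ F₁ z) ((z.re:ℂ) + (z.im:ℂ)*Complex.I) := by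
        rw [Complex.re_add_im]; exact hdF₁ z hz
      simpa [Function.comp_def] using hF.comp_hasDerivAt z.im hc
    rw [← h1.deriv, ← h2.deriv]; exact hCR₁ z hz
  have hCR₂' : ∀ z ∈ D, fderiv ℝ F₀ z Complex.I = - fderiv ℝ F₁ z 1 := by
    intro z hz
    have h1 : HasDerivAt (fun t : ℝ => F₀ ((z.re:ℂ) + (t:ℂ)*Complex.I))
        (fderiv ℝ F₀ z Complex.I) z.im := by
      have hc : HasDerivAt (fun t:ℝ => (z.re:ℂ) + (t:ℂ)*Complex.I) Complex.I z.im := by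
        simpa using ((Complex.ofRealCLM.hasDerivAt (x := z.im)).mul_const Complex.I).const_add
          (z.re:ℂ)
      have hF : HasFDerivAt F₀ (fderiv ℝ F₀ z) ((z.re:ℂ) + (z.im:ℂ)*Complex.I) := by
        rw [Complex.re_add_im]; exact hdF₀ z hz
      simpa [Function.comp_def] using hF.comp_hasDerivAt z.im hc
    have h2 : HasDerivAt (fun t : ℝ => F₁ ((t:ℂ) + (z.im:ℂ)*Complex.I))
        (fderiv ℝ F₁ z 1) z.re := by
      have hc : HasDerivAt (fun t:ℝ => (t:ℂ) + (z.im:ℂ)*Complex.I) 1 z.re := by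
        simpa using (Complex.ofRealCLM.hasDerivAt (x := z.re)).add_const ((z.im:ℂ)*Complex.I)
      have hF : HasFDerivAt F₁ (fderiv ℝ F₁ z) ((z.re:ℂ) + (z.im:ℂ)*Complex.I) := by
        rw [Complex.re_add_im]; exact hdF₁ z hz
      simpa [Function.comp_def] using hF.comp_hasDerivAt z.re hc
    rw [← h1.deriv, ← h2.deriv]; exact hCR₂ z hz
  -- the key step: F₁ vanishes at points with positive imaginary part
  have key : ∀ z ∈ D, 0 < z.im → F₁ z = 0 := by
    intro z hz hzim
    set q : ℍ[ℝ] := (z.re : ℍ[ℝ]) + z.im • qI with hqdef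
    have hqre : q.re = z.re := by simp [hqdef]
    have hqim : q.im = z.im • qI := by ext <;> simp [hqdef]
    have hqimI : q.imI = z.im := by simp [hqdef]
    have hqimJ : q.imJ = 0 := by simp [hqdef]
    have hqimK : q.imK = 0 := by simp [hqdef]
    have hnq : ‖q.im‖ = z.im := by
      rw [hqim, norm_smul, norm_qI, Real.norm_eq_abs, abs_of_pos hzim, mul_one]
    have him : q.im ≠ 0 := by
      intro h
      have h2 : q.im.imI = 0 := by rw [h]; simp
      rw [hqim] at h2; simp at h2; exact hzim.ne' h2
    have hqΩ : q ∈ Ω := by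
      rw [hΩ]
      show ((q.re : ℂ) + (‖q.im‖ : ℂ) * Complex.I) ∈ D
      rw [hqre, hnq, Complex.re_add_im]; exact hz
    set L₀ := fderiv ℝ F₀ z with hL₀
    set L₁ := fderiv ℝ F₁ z with hL₁
    have hFz₀ : HasFDerivAt F₀ L₀ z := hdF₀ z hz
    have hFz₁ : HasFDerivAt F₁ L₁ z := hdF₁ z hz
    have hmem : ∀ v : ℍ[ℝ], ∀ᶠ t : ℝ in nhds 0, q + t • v ∈ Ω := by
      intro v
      have hc : Continuous fun t : ℝ => q + t • v :=
        continuous_const.add (continuous_id.smul continuous_const)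
      have h0 : q + (0:ℝ) • v ∈ Ω := by simpa using hqΩ
      exact hc.continuousAt.eventually_mem (hΩopen.mem_nhds h0)
    -- direction 1
    have hd1 : fderiv ℝ f q 1 = L₀ 1 + qI * L₁ 1 := by
      apply aux_dirDeriv f q 1 (hdiff q hqΩ)
      have hc : HasDerivAt (fun t:ℝ => (z.re:ℂ) + (t:ℂ) + (z.im:ℂ)*Complex.I) 1 0 := by
        simpa using (((Complex.ofRealCLM.hasDerivAt (x := (0:ℝ))).const_add
          (z.re:ℂ)).add_const ((z.im:ℂ)*Complex.I))
      have hc0 : (z.re:ℂ) + ((0:ℝ):ℂ) + (z.im:ℂ)*Complex.I = z := by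
        simpa using Complex.re_add_im z
      have hF0 : HasFDerivAt F₀ L₀ ((z.re:ℂ) + ((0:ℝ):ℂ) + (z.im:ℂ)*Complex.I) := by
        rw [hc0]; exact hFz₀
      have hF1 : HasFDerivAt F₁ L₁ ((z.re:ℂ) + ((0:ℝ):ℂ) + (z.im:ℂ)*Complex.I) := by
        rw [hc0]; exact hFz₁
      have hgd : HasDerivAt (fun t:ℝ =>
          F₀ ((z.re:ℂ) + (t:ℂ) + (z.im:ℂ)*Complex.I) +
            qI * F₁ ((z.re:ℂ) + (t:ℂ) + (z.im:ℂ)*Complex.I)) (L₀ 1 + qI * L₁ 1) 0 := by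
        have h₀ : HasDerivAt (fun t:ℝ => F₀ ((z.re:ℂ) + (t:ℂ) + (z.im:ℂ)*Complex.I)) (L₀ 1) 0 :=
          hF0.comp_hasDerivAt 0 hc
        have h₁ : HasDerivAt (fun t:ℝ => qI * F₁ ((z.re:ℂ) + (t:ℂ) + (z.im:ℂ)*Complex.I))
            (qI * L₁ 1) 0 := (hF1.comp_hasDerivAt 0 hc).const_mul qI
        exact h₀.add h₁
      apply hgd.congr_of_eventuallyEq
      filter_upwards [hmem 1] with t ht
      have h1 : (q + t • (1:ℍ[ℝ])).im = q.im := by ext <;> simp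
      have h1' : (q + t • (1:ℍ[ℝ])).im ≠ 0 := by rw [h1]; exact him
      have h2 : ((q + t • (1:ℍ[ℝ])).re : ℂ) = (z.re:ℂ) + (t:ℂ) := by
        push_cast; simp [hqre]
      rw [hf_im _ ht h1', h1, h2, hnq, hqim, smul_smul, inv_mul_cancel₀ hzim.ne', one_smul]
    -- direction qI
    have hd2 : fderiv ℝ f q qI = L₀ Complex.I + qI * L₁ Complex.I := by
      apply aux_dirDeriv f q qI (hdiff q hqΩ)
      have hc : HasDerivAt (fun t:ℝ => (z.re:ℂ) + ((z.im:ℂ) + (t:ℂ))*Complex.I) Complex.I 0 := by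
        have := (((Complex.ofRealCLM.hasDerivAt (x := (0:ℝ))).const_add
          ((z.im:ℂ))).mul_const Complex.I).const_add (z.re:ℂ)
        simpa using this
      have hc0 : (z.re:ℂ) + ((z.im:ℂ) + ((0:ℝ):ℂ))*Complex.I = z := by
        simpa using Complex.re_add_im z
      have hF0 : HasFDerivAt F₀ L₀ ((z.re:ℂ) + ((z.im:ℂ) + ((0:ℝ):ℂ))*Complex.I) := by
        rw [hc0]; exact hFz₀
      have hF1 : HasFDerivAt F₁ L₁ ((z.re:ℂ) + ((z.im:ℂ) + ((0:ℝ):ℂ))*Complex.I) := by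
        rw [hc0]; exact hFz₁
      have hgd : HasDerivAt (fun t:ℝ =>
          F₀ ((z.re:ℂ) + ((z.im:ℂ) + (t:ℂ))*Complex.I) +
            qI * F₁ ((z.re:ℂ) + ((z.im:ℂ) + (t:ℂ))*Complex.I))
          (L₀ Complex.I + qI * L₁ Complex.I) 0 := by
        have h₀ := hF0.comp_hasDerivAt 0 hc
        have h₁ := (hF1.comp_hasDerivAt 0 hc).const_mul qI
        exact h₀.add h₁
      apply hgd.congr_of_eventuallyEq
      have hpos : ∀ᶠ t : ℝ in nhds 0, 0 < z.im + t := by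
        have hcont : Continuous fun t : ℝ => z.im + t := continuous_const.add continuous_id
        have h0 : z.im + (0:ℝ) ∈ Set.Ioi (0:ℝ) := by simpa using hzim
        exact hcont.continuousAt.eventually_mem (isOpen_Ioi.mem_nhds h0)
      filter_upwards [hmem qI, hpos] with t ht htpos
      have h1 : (q + t • qI).im = (z.im + t) • qI := by
        ext <;> simp [hqdef] <;> ring
      have h1' : (q + t • qI).im ≠ 0 := by
        rw [h1]; intro h
        have h2 : ((z.im + t) • qI).imI = 0 := by rw [h]; simp
        simp at h2; exact htpos.ne' h2
      have hn1 : ‖(q + t • qI).im‖ = z.im + t := by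
        rw [h1, norm_smul, norm_qI, Real.norm_eq_abs, abs_of_pos htpos, mul_one]
      have h2 : ((q + t • qI).re : ℂ) = (z.re:ℂ) := by push_cast; simp [hqre]
      rw [hf_im _ ht h1', hn1, h1, h2, smul_smul, inv_mul_cancel₀ htpos.ne', one_smul]
      push_cast
      ring_nf
    -- directions qJ and qK
    have hr : HasDerivAt (fun t:ℝ => Real.sqrt (z.im^2 + t^2)) 0 0 := by
      have h1 : HasDerivAt (fun t:ℝ => z.im^2 + t^2) (2*0) 0 := by
        simpa using (hasDerivAt_pow 2 (0:ℝ)).const_add (z.im^2)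
      have := h1.sqrt (by simpa using pow_ne_zero 2 hzim.ne')
      simpa using this
    have hr0 : Real.sqrt (z.im^2 + 0^2) = z.im := by
      simpa using Real.sqrt_sq hzim.le
    have hrne : Real.sqrt (z.im^2 + 0^2) ≠ 0 := by rw [hr0]; exact hzim.ne'
    have hrc : HasDerivAt (fun t:ℝ =>
        (z.re:ℂ) + ((Real.sqrt (z.im^2 + t^2) : ℝ):ℂ)*Complex.I) 0 0 := by
      have h1 : HasDerivAt (fun t:ℝ => ((Real.sqrt (z.im^2 + t^2) : ℝ):ℂ))
          (Complex.ofRealCLM 0) 0 := Complex.ofRealCLM.hasFDerivAt.comp_hasDerivAt 0 hr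
      have := (h1.mul_const Complex.I).const_add (z.re:ℂ)
      simpa using this
    have hrc0 : (z.re:ℂ) + ((Real.sqrt (z.im^2 + 0^2) : ℝ):ℂ)*Complex.I = z := by
      rw [hr0]; exact Complex.re_add_im z
    have hri : HasDerivAt (fun t:ℝ => (Real.sqrt (z.im^2 + t^2))⁻¹) 0 0 := by
      simpa [Pi.inv_def, Function.comp_def] using hr.inv hrne
    have hF0c : HasDerivAt (fun t:ℝ =>
        F₀ ((z.re:ℂ) + ((Real.sqrt (z.im^2 + t^2) : ℝ):ℂ)*Complex.I)) 0 0 := by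
      have hF : HasFDerivAt F₀ L₀ ((z.re:ℂ) + ((Real.sqrt (z.im^2+0^2):ℝ):ℂ)*Complex.I) := by
        rw [hrc0]; exact hFz₀
      simpa [Function.comp_def] using hF.comp_hasDerivAt 0 hrc
    have hF1c : HasDerivAt (fun t:ℝ =>
        F₁ ((z.re:ℂ) + ((Real.sqrt (z.im^2 + t^2) : ℝ):ℂ)*Complex.I)) 0 0 := by
      have hF : HasFDerivAt F₁ L₁ ((z.re:ℂ) + ((Real.sqrt (z.im^2+0^2):ℝ):ℂ)*Complex.I) := by
        rw [hrc0]; exact hFz₁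
      simpa [Function.comp_def] using hF.comp_hasDerivAt 0 hrc
    have hF1c0 : F₁ ((z.re:ℂ) + ((Real.sqrt (z.im^2+0^2):ℝ):ℂ)*Complex.I) = F₁ z := by
      rw [hrc0]
    have hd3 : fderiv ℝ f q qJ = (z.im⁻¹ • qJ) * F₁ z := by
      apply aux_dirDeriv f q qJ (hdiff q hqΩ)
      have hw : HasDerivAt (fun t:ℝ => z.im • qI + t • qJ) qJ 0 := by
        simpa using ((hasDerivAt_id (0:ℝ)).smul_const qJ).const_add (z.im • qI)
      have hu : HasDerivAt (fun t:ℝ => (Real.sqrt (z.im^2 + t^2))⁻¹ • (z.im • qI + t • qJ))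
          (z.im⁻¹ • qJ) 0 := by
        have := hri.smul hw
        simpa [Pi.smul_def', Function.comp_def, Real.sqrt_sq hzim.le] using this
      have hgd : HasDerivAt (fun t:ℝ =>
          F₀ ((z.re:ℂ) + ((Real.sqrt (z.im^2 + t^2) : ℝ):ℂ)*Complex.I) +
            ((Real.sqrt (z.im^2 + t^2))⁻¹ • (z.im • qI + t • qJ)) *
              F₁ ((z.re:ℂ) + ((Real.sqrt (z.im^2 + t^2) : ℝ):ℂ)*Complex.I))
          ((z.im⁻¹ • qJ) * F₁ z) 0 := by
        have hprod := hu.mul hF1c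
        have := hF0c.add hprod
        simpa [Pi.add_def, Pi.mul_def, Function.comp_def, Real.sqrt_sq hzim.le, Complex.re_add_im] using this
      apply hgd.congr_of_eventuallyEq
      filter_upwards [hmem qJ] with t ht
      have h1 : (q + t • qJ).im = z.im • qI + t • qJ := by ext <;> simp [hqdef]
      have h1' : (q + t • qJ).im ≠ 0 := by
        rw [h1]; intro h
        have h2 : ((z.im • qI + t • qJ) : ℍ[ℝ]).imI = 0 := by rw [h]; simp
        simp at h2; exact hzim.ne' h2
      have hn1 : ‖(q + t • qJ).im‖ = Real.sqrt (z.im^2 + t^2) := by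
        rw [aux_norm_im]
        have e1 : (q + t • qJ).imI = z.im := by simp [hqdef]
        have e2 : (q + t • qJ).imJ = t := by simp [hqdef]
        have e3 : (q + t • qJ).imK = 0 := by simp [hqdef]
        rw [e1, e2, e3]; ring_nf
      have h2 : ((q + t • qJ).re : ℂ) = (z.re:ℂ) := by push_cast; simp [hqre]
      rw [hf_im _ ht h1', hn1, h1, h2]
    have hd4 : fderiv ℝ f q qK = (z.im⁻¹ • qK) * F₁ z := by
      apply aux_dirDeriv f q qK (hdiff q hqΩ)
      have hw : HasDerivAt (fun t:ℝ => z.im • qI + t • qK) qK 0 := by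
        simpa using ((hasDerivAt_id (0:ℝ)).smul_const qK).const_add (z.im • qI)
      have hu : HasDerivAt (fun t:ℝ => (Real.sqrt (z.im^2 + t^2))⁻¹ • (z.im • qI + t • qK))
          (z.im⁻¹ • qK) 0 := by
        have := hri.smul hw
        simpa [Pi.smul_def', Function.comp_def, Real.sqrt_sq hzim.le] using this
      have hgd : HasDerivAt (fun t:ℝ =>
          F₀ ((z.re:ℂ) + ((Real.sqrt (z.im^2 + t^2) : ℝ):ℂ)*Complex.I) +
            ((Real.sqrt (z.im^2 + t^2))⁻¹ • (z.im • qI + t • qK)) *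
              F₁ ((z.re:ℂ) + ((Real.sqrt (z.im^2 + t^2) : ℝ):ℂ)*Complex.I))
          ((z.im⁻¹ • qK) * F₁ z) 0 := by
        have hprod := hu.mul hF1c
        have := hF0c.add hprod
        simpa [Pi.add_def, Pi.mul_def, Function.comp_def, Real.sqrt_sq hzim.le, Complex.re_add_im] using this
      apply hgd.congr_of_eventuallyEq
      filter_upwards [hmem qK] with t ht
      have h1 : (q + t • qK).im = z.im • qI + t • qK := by ext <;> simp [hqdef]
      have h1' : (q + t • qK).im ≠ 0 := by
        rw [h1]; intro h
        have h2 : ((z.im • qI + t • qK) : ℍ[ℝ]).imI = 0 := by rw [h]; simp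
        simp at h2; exact hzim.ne' h2
      have hn1 : ‖(q + t • qK).im‖ = Real.sqrt (z.im^2 + t^2) := by
        rw [aux_norm_im]
        have e1 : (q + t • qK).imI = z.im := by simp [hqdef]
        have e2 : (q + t • qK).imJ = 0 := by simp [hqdef]
        have e3 : (q + t • qK).imK = t := by simp [hqdef]
        rw [e1, e2, e3]; ring_nf
      have h2 : ((q + t • qK).re : ℂ) = (z.re:ℂ) := by push_cast; simp [hqre]
      rw [hf_im _ ht h1', hn1, h1, h2]
    -- assemble via the CRF equation
    have heq := hCRF q hqΩ
    rw [hd1, hd2, hd3, hd4, hCR₁' z hz, hCR₂' z hz] at heq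
    have hI : qI * (-(L₁ 1) + qI * (L₁ Complex.I)) = -(qI * L₁ 1) + -(L₁ Complex.I) := by
      rw [mul_add, mul_neg, ← mul_assoc, qI_mul_qI, neg_one_mul]
    have hJ : qJ * ((z.im⁻¹ • qJ) * F₁ z) = -(z.im⁻¹ • F₁ z) := by
      rw [smul_mul_assoc, mul_smul_comm, ← mul_assoc, qJ_mul_qJ, neg_one_mul, smul_neg]
    have hK : qK * ((z.im⁻¹ • qK) * F₁ z) = -(z.im⁻¹ • F₁ z) := by
      rw [smul_mul_assoc, mul_smul_comm, ← mul_assoc, qK_mul_qK, neg_one_mul, smul_neg]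
    rw [hI, hJ, hK] at heq
    have h5 : z.im⁻¹ • F₁ z = 0 := by
      have h6 : (2:ℝ) • (z.im⁻¹ • F₁ z) = 0 := by
        rw [two_smul]
        calc z.im⁻¹ • F₁ z + z.im⁻¹ • F₁ z
            = -(L₁ Complex.I + qI * L₁ 1 + (-(qI * L₁ 1) + -(L₁ Complex.I)) +
                -(z.im⁻¹ • F₁ z) + -(z.im⁻¹ • F₁ z)) := by abel
          _ = -0 := by rw [heq]
          _ = 0 := neg_zero
      have := smul_eq_zero.mp h6
      rcases this with h | h
      · norm_num at h
      · exact h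
    rcases smul_eq_zero.mp h5 with h | h
    · exact absurd h (inv_ne_zero hzim.ne')
    · exact h
  -- F₁ vanishes on D
  have hF1zero : ∀ z ∈ D, F₁ z = 0 := by
    intro z hz
    rcases lt_trichotomy z.im 0 with h | h | h
    · have hconj : (starRingEnd ℂ) z ∈ D := hDconj z hz
      have him : 0 < ((starRingEnd ℂ) z).im := by
        simpa [Complex.conj_im] using neg_pos.mpr h
      have h0 := key _ hconj him
      have h1 := hstem₁ z hz
      rw [h0] at h1
      exact (neg_eq_zero.mp h1.symm)
    · have hcz : (starRingEnd ℂ) z = z := Complex.conj_eq_iff_im.mpr h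
      have h1 := hstem₁ z hz
      rw [hcz] at h1
      have h2 : (2:ℝ) • F₁ z = 0 := by
        rw [two_smul]; nth_rewrite 2 [h1]; simp
      exact (smul_eq_zero.mp h2).resolve_left (by norm_num)
    · exact key z hz h
  -- hence fderiv of F₁ vanishes on D
  have hL1zero : ∀ z ∈ D, fderiv ℝ F₁ z = 0 := by
    intro z hz
    have hev : F₁ =ᶠ[nhds z] fun _ => 0 := by
      filter_upwards [hD.mem_nhds hz] with w hw
      exact hF1zero w hw
    have : HasFDerivAt F₁ (0 : ℂ →L[ℝ] ℍ[ℝ]) z :=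
      (hasFDerivAt_const (0:ℍ[ℝ]) z).congr_of_eventuallyEq hev
    exact this.fderiv
  -- hence fderiv of F₀ vanishes on D
  have hL0zero : ∀ z ∈ D, fderiv ℝ F₀ z = 0 := by
    intro z hz
    have h1 : fderiv ℝ F₀ z 1 = 0 := by
      rw [hCR₁' z hz, hL1zero z hz]; rfl
    have h2 : fderiv ℝ F₀ z Complex.I = 0 := by
      rw [hCR₂' z hz, hL1zero z hz]; simp
    refine ContinuousLinearMap.ext fun w => ?_
    have hw : (w : ℂ) = w.re • (1:ℂ) + w.im • Complex.I := by
      simp [Complex.real_smul]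
    rw [ContinuousLinearMap.zero_apply]
    calc fderiv ℝ F₀ z w = fderiv ℝ F₀ z (w.re • (1:ℂ) + w.im • Complex.I) := by rw [← hw]
      _ = w.re • fderiv ℝ F₀ z 1 + w.im • fderiv ℝ F₀ z Complex.I := by
          rw [map_add, map_smul, map_smul]
      _ = 0 := by rw [h1, h2]; simp
  -- F₀ is locally constant on D
  have hF0loc : ∀ z ∈ D, ∃ ε > 0, Metric.ball z ε ⊆ D ∧
      ∀ w ∈ Metric.ball z ε, F₀ w = F₀ z := by
    intro z hz
    rcases Metric.isOpen_iff.mp hD z hz with ⟨ε, hε, hball⟩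
    refine ⟨ε, hε, hball, fun w hw => ?_⟩
    have hconv : Convex ℝ (Metric.ball z ε) := convex_ball z ε
    have hdiffOn : DifferentiableOn ℝ F₀ (Metric.ball z ε) :=
      ((hF₀.differentiableOn one_ne_zero).mono hball)
    have hfd : ∀ x ∈ Metric.ball z ε, fderivWithin ℝ F₀ (Metric.ball z ε) x = 0 := by
      intro x hx
      rw [fderivWithin_of_isOpen Metric.isOpen_ball hx]
      exact hL0zero x (hball hx)
    exact hconv.is_const_of_fderivWithin_eq_zero hdiffOn hfd hw (Metric.mem_ball_self hε)
  -- f equals F₀ ∘ Z on Ω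
  have hfZ : ∀ q ∈ Ω, f q = F₀ ((q.re : ℂ) + (‖q.im‖ : ℂ) * Complex.I) := by
    intro q hq
    by_cases him : q.im = 0
    · rw [hf_re q hq him, him]
      norm_num
    · rw [hf_im q hq him, hF1zero _ (by rw [hΩ] at hq; exact hq), mul_zero, add_zero]
  -- f is locally constant on Ω, hence constant
  rcases hconn.nonempty with ⟨q₀, hq₀⟩
  refine ⟨f q₀, fun q hq => ?_⟩
  have hlc : IsLocallyConstant (fun x : Ω => f x.1) := by
    rw [IsLocallyConstant.iff_exists_open]
    rintro ⟨x, hx⟩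
    have hxD : ((x.re : ℂ) + (‖x.im‖ : ℂ) * Complex.I) ∈ D := by rw [hΩ] at hx; exact hx
    rcases hF0loc _ hxD with ⟨ε, hε, hball, hconst⟩
    refine ⟨Subtype.val ⁻¹' ((fun q : ℍ[ℝ] => ((q.re : ℂ) + (‖q.im‖ : ℂ) * Complex.I)) ⁻¹'
      Metric.ball ((x.re : ℂ) + (‖x.im‖ : ℂ) * Complex.I) ε), ?_, ?_, ?_⟩
    · exact (Metric.isOpen_ball.preimage hZcont).preimage continuous_subtype_val
    · show ((x.re : ℂ) + (‖x.im‖ : ℂ) * Complex.I) ∈ Metric.ball _ ε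
      exact Metric.mem_ball_self hε
    · rintro ⟨y, hy⟩ hymem
      show f y = f x
      rw [hfZ y hy, hfZ x hx, hconst _ hymem]
  have : PreconnectedSpace Ω := Subtype.preconnectedSpace hconn.isPreconnected
  exact hlc.apply_eq_of_preconnectedSpace ⟨q, hq⟩ ⟨q₀, hq₀⟩
end
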